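/- arXiv:1908.10024 — 5 statements merged into one kernel-verified Lean document; each statement's English description precedes it below -/
import Mathlib

section
/- Hoeffding's inequality (part 2, convex order): Let X ~ PB(p_1,...,p_n), p̄ = (p_1+...+p_n)/n, and X̄ ~ Bin(n, p̄). For every function g : {0,1,...,n} → ℝ that is convex in the discrete sense, i.e. g(k+2) − 2g(k+1) + g(k) > 0 for all 0 ≤ k ≤ n−2, one has E[g(X)] ≤ E[g(X̄)], with equality if and only if p_1 = p_2 = ... = p_n = p̄. -/
open scoped BigOperators

/-- The Poisson binomial probability mass function `PB(p_1, ..., p_n)`. -/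
noncomputable def pbPMF (n : ℕ) (p : Fin n → ℝ) (k : ℕ) : ℝ :=
  ∑ A ∈ Finset.powersetCard k (Finset.univ : Finset (Fin n)),
    (∏ i ∈ A, p i) * ∏ i ∈ Aᶜ, (1 - p i)

/-- The binomial probability mass function `Bin(n, p)`. -/
noncomputable def binPMF (n : ℕ) (p : ℝ) (k : ℕ) : ℝ :=
  (n.choose k : ℝ) * p ^ k * (1 - p) ^ (n - k)

open Finset Function

/-!
Hoeffding's smoothing argument. Write `E_p[g]` for `E[g(X)]`, `X ~ PB(p)`. Conditioning on
`ξ_i` and `ξ_j`, `E_p[g]` depends on `(p_i, p_j)` only through `p_i + p_j` and `p_i p_j`, and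
changing the pair without changing its sum changes `E_p[g]` by `Δ(p_i p_j) · E[Δ²g(X')]`, where
`X'` is the sum of the other `ξ_k`. As `Δ²g > 0`, replacing a pair `p_i < p̄ < p_j` by
`(p̄, p_i + p_j - p̄)` strictly increases `E_p[g]`, keeps the mean, and fixes one more coordinate
at `p̄`; after finitely many steps `p` is constant and `X` is binomial.
-/

lemma exists_lt_of_sum_eq_of_lt {ι : Type*} [Fintype ι] {f g : ι → ℝ} (h : ∑ x, f x = ∑ x, g x)
    {i : ι} (hi : f i < g i) : ∃ j, g j < f j := by
  by_contra! H
  exact (sum_lt_sum (fun j _ => H j) ⟨i, mem_univ i, hi⟩).ne h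

/-- `E[g(∑_{i ∈ s} ξ_i)]` for independent `ξ_i ~ Bernoulli(p i)`, summed over the success set. -/
noncomputable def pbExpect {ι : Type*} [DecidableEq ι] (s : Finset ι) (p : ι → ℝ)
    (g : ℕ → ℝ) : ℝ :=
  ∑ t ∈ s.powerset, (∏ i ∈ t, p i) * (∏ i ∈ s \ t, (1 - p i)) * g #t

def secondDiff (g : ℕ → ℝ) (k : ℕ) : ℝ :=
  g (k + 2) - 2 * g (k + 1) + g k

section pbExpect

variable {ι : Type*} [DecidableEq ι] {s : Finset ι} {p q : ι → ℝ}

lemma pbExpect_congr (h : ∀ i ∈ s, p i = q i) (g : ℕ → ℝ) :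
    pbExpect s p g = pbExpect s q g := by
  refine sum_congr rfl fun t ht => ?_
  have hts := mem_powerset.1 ht
  rw [prod_congr rfl fun i hi => h i (hts hi),
    prod_congr rfl fun i hi => congrArg (1 - ·) (h i (mem_sdiff.1 hi).1)]

lemma pbExpect_const_one (s : Finset ι) (p : ι → ℝ) : pbExpect s p (fun _ => 1) = 1 := by
  simp only [pbExpect, mul_one, ← prod_add, add_sub_cancel, prod_const_one]

lemma pbExpect_secondDiff (s : Finset ι) (p : ι → ℝ) (g : ℕ → ℝ) :
    pbExpect s p (secondDiff g) =
      pbExpect s p (fun k => g (k + 2)) - 2 * pbExpect s p (fun k => g (k + 1)) +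
        pbExpect s p g := by
  simp only [pbExpect, secondDiff, mul_sum, ← sum_sub_distrib, ← sum_add_distrib]
  exact sum_congr rfl fun _ _ => by ring

lemma pbExpect_pos {f : ℕ → ℝ} (hp : ∀ i ∈ s, 0 ≤ p i ∧ p i ≤ 1)
    (hf : ∀ k ≤ #s, 0 < f k) : 0 < pbExpect s p f := by
  have hw : ∀ t ∈ s.powerset, 0 ≤ (∏ i ∈ t, p i) * ∏ i ∈ s \ t, (1 - p i) := fun t ht =>
    mul_nonneg (prod_nonneg fun i hi => (hp i (mem_powerset.1 ht hi)).1)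
      (prod_nonneg fun i hi => sub_nonneg.2 (hp i (mem_sdiff.1 hi).1).2)
  obtain ⟨t, ht, hwt⟩ : ∃ t ∈ s.powerset, 0 < (∏ i ∈ t, p i) * ∏ i ∈ s \ t, (1 - p i) := by
    refine exists_lt_of_sum_lt ?_
    have h1 := pbExpect_const_one s p
    simp only [pbExpect, mul_one] at h1
    simp [h1]
  have hf' : ∀ t ∈ s.powerset, 0 < f #t := fun t ht => hf _ (card_le_card (mem_powerset.1 ht))
  exact sum_pos' (fun t ht => mul_nonneg (hw t ht) (hf' t ht).le) ⟨t, ht, mul_pos hwt (hf' t ht)⟩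

lemma pbExpect_insert {i : ι} (hi : i ∉ s) (p : ι → ℝ) (g : ℕ → ℝ) :
    pbExpect (insert i s) p g =
      (1 - p i) * pbExpect s p g + p i * pbExpect s p (fun k => g (k + 1)) := by
  rw [pbExpect, sum_powerset_insert hi, pbExpect, pbExpect, mul_sum, mul_sum]
  congr 1 <;> refine sum_congr rfl fun t ht => ?_
  · have hit : i ∉ t := fun h => hi (mem_powerset.1 ht h)
    rw [insert_sdiff_of_notMem _ hit, prod_insert (fun h => hi (mem_sdiff.1 h).1)]
    ring
  · have hit : i ∉ t := fun h => hi (mem_powerset.1 ht h)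
    rw [insert_sdiff_insert, sdiff_insert_of_notMem hi, prod_insert hit, card_insert_of_notMem hit]
    ring

variable [Fintype ι] {i j : ι}

lemma univ_eq_insert_insert_erase_erase (hij : i ≠ j) :
    (univ : Finset ι) = insert i (insert j ((univ.erase i).erase j)) := by
  rw [insert_erase (mem_erase.2 ⟨hij.symm, mem_univ j⟩), insert_erase (mem_univ i)]

lemma sum_eq_sum_of_eq_off_pair (hij : i ≠ j) (hpq : ∀ x, x ≠ i → x ≠ j → p x = q x)
    (hsum : p i + p j = q i + q j) : ∑ x, p x = ∑ x, q x := by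
  have hs : ∑ x ∈ (univ.erase i).erase j, p x = ∑ x ∈ (univ.erase i).erase j, q x :=
    sum_congr rfl fun x hx => hpq x (ne_of_mem_erase (mem_of_mem_erase hx)) (ne_of_mem_erase hx)
  have hj : j ∉ (univ.erase i).erase j := notMem_erase j _
  have hi : i ∉ insert j ((univ.erase i).erase j) := by simp [hij]
  rw [univ_eq_insert_insert_erase_erase hij, sum_insert hi, sum_insert hi, sum_insert hj,
    sum_insert hj, hs, ← add_assoc, ← add_assoc, hsum]

lemma pbExpect_univ_sub_of_eq_off_pair (hij : i ≠ j) (hpq : ∀ x, x ≠ i → x ≠ j → p x = q x)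
    (hsum : p i + p j = q i + q j) (g : ℕ → ℝ) :
    pbExpect univ q g - pbExpect univ p g =
      (q i * q j - p i * p j) * pbExpect ((univ.erase i).erase j) p (secondDiff g) := by
  conv_lhs => rw [univ_eq_insert_insert_erase_erase hij]
  set s := (univ.erase i).erase j
  have hj : j ∉ s := notMem_erase j _
  have hi : i ∉ insert j s := by simp [s, hij]
  have hqp : ∀ f, pbExpect s q f = pbExpect s p f := pbExpect_congr fun x hx =>
    (hpq x (ne_of_mem_erase (mem_of_mem_erase hx)) (ne_of_mem_erase hx)).symm
  simp only [pbExpect_insert hi, pbExpect_insert hj, hqp, add_assoc, Nat.reduceAdd,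
    pbExpect_secondDiff]
  linear_combination (pbExpect s p g - pbExpect s p (fun k => g (k + 1))) * hsum

lemma pbExpect_lt_of_eq_off_pair (hp : ∀ x, 0 ≤ p x ∧ p x ≤ 1)
    {g : ℕ → ℝ} (hg : ∀ k, k + 2 ≤ Fintype.card ι → 0 < secondDiff g k)
    (hij : i ≠ j) (hpq : ∀ x, x ≠ i → x ≠ j → p x = q x)
    (hsum : p i + p j = q i + q j) (hmul : p i * p j < q i * q j) :
    pbExpect univ p g < pbExpect univ q g := by
  have hcard : #((univ.erase i).erase j) + 2 = Fintype.card ι := by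
    rw [card_erase_of_mem (mem_erase.2 ⟨hij.symm, mem_univ j⟩), card_erase_of_mem (mem_univ i),
      card_univ]
    have : 1 < Fintype.card ι := Fintype.one_lt_card_iff.2 ⟨i, j, hij⟩
    omega
  have hpos : 0 < pbExpect ((univ.erase i).erase j) p (secondDiff g) :=
    pbExpect_pos (fun x _ => hp x) fun k hk => hg k (by omega)
  have := pbExpect_univ_sub_of_eq_off_pair hij hpq hsum g
  nlinarith [mul_pos (sub_pos.2 hmul) hpos]

theorem pbExpect_lt_pbExpect_const {c : ℝ} (hp : ∀ x, 0 ≤ p x ∧ p x ≤ 1) {g : ℕ → ℝ}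
    (hg : ∀ k, k + 2 ≤ Fintype.card ι → 0 < secondDiff g k)
    (hmean : ∑ x, p x = Fintype.card ι * c) (hne : ∃ x, p x ≠ c) :
    pbExpect univ p g < pbExpect univ (fun _ : ι => c) g := by
  induction hN : #{x : ι | p x ≠ c} using Nat.strong_induction_on generalizing p with
  | _ N ih =>
  have hmean' : ∑ x, p x = ∑ _x : ι, c := by simp [hmean]
  obtain ⟨i, j, hi, hj⟩ : ∃ i j, p i < c ∧ c < p j := by
    obtain ⟨x, hx⟩ := hne
    rcases hx.lt_or_gt with hx | hx
    · obtain ⟨j, hj⟩ := exists_lt_of_sum_eq_of_lt hmean' hx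
      exact ⟨x, j, hx, hj⟩
    · obtain ⟨i, hi⟩ := exists_lt_of_sum_eq_of_lt hmean'.symm hx
      exact ⟨i, x, hi, hx⟩
  have hij : i ≠ j := by rintro rfl; linarith
  set q := update (update p i c) j (p i + p j - c)
  have hqi : q i = c := by simp [q, hij]
  have hqj : q j = p i + p j - c := by simp [q]
  have hpq : ∀ x, x ≠ i → x ≠ j → p x = q x := fun x hxi hxj => by simp [q, hxi, hxj]
  have hsum : p i + p j = q i + q j := by rw [hqi, hqj]; ring
  have hlt : pbExpect univ p g < pbExpect univ q g :=
    pbExpect_lt_of_eq_off_pair hp hg hij hpq hsum (by rw [hqi, hqj]; nlinarith)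
  by_cases hqc : ∀ x, q x = c
  · rwa [show q = fun _ => c from funext hqc] at hlt
  have hq01 : ∀ x, 0 ≤ q x ∧ q x ≤ 1 := by
    intro x
    by_cases hxi : x = i
    · subst hxi; rw [hqi]; constructor <;> linarith [hp x, hp j]
    by_cases hxj : x = j
    · subst hxj; rw [hqj]; constructor <;> linarith [hp x, hp i]
    rw [← hpq x hxi hxj]; exact hp x
  have hcount : #{x : ι | q x ≠ c} < N := by
    rw [← hN]
    refine card_lt_card ⟨fun x hx => ?_, fun h => ?_⟩
    · simp only [mem_filter, mem_univ, true_and] at hx ⊢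
      by_cases hxi : x = i
      · exact absurd (hxi ▸ hqi) hx
      by_cases hxj : x = j
      · exact hxj ▸ hj.ne'
      rwa [hpq x hxi hxj]
    · exact (mem_filter.1 (h (mem_filter.2 ⟨mem_univ i, hi.ne⟩))).2 hqi
  exact hlt.trans (ih _ hcount hq01 ((sum_eq_sum_of_eq_off_pair hij hpq hsum).symm.trans hmean)
    (not_forall.1 hqc) rfl)

end pbExpect

lemma sum_pbPMF_mul_eq_pbExpect (n : ℕ) (p : Fin n → ℝ) (g : ℕ → ℝ) :
    ∑ k ∈ range (n + 1), pbPMF n p k * g k = pbExpect univ p g := by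
  rw [pbExpect, sum_powerset, card_univ, Fintype.card_fin]
  refine sum_congr rfl fun k _ => ?_
  rw [pbPMF, sum_mul]
  refine sum_congr rfl fun t ht => ?_
  rw [compl_eq_univ_sdiff, (mem_powersetCard.1 ht).2]

lemma binPMF_eq_pbPMF_const (n : ℕ) (c : ℝ) (k : ℕ) : binPMF n c k = pbPMF n (fun _ => c) k := by
  have hterm : ∀ t ∈ powersetCard k (univ : Finset (Fin n)),
      (∏ _i ∈ t, c) * ∏ _i ∈ tᶜ, (1 - c) = c ^ k * (1 - c) ^ (n - k) := fun t ht => by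
    rw [prod_const, prod_const, card_compl, (mem_powersetCard.1 ht).2, Fintype.card_fin]
  rw [pbPMF, sum_congr rfl hterm, sum_const, card_powersetCard, card_univ, Fintype.card_fin,
    nsmul_eq_mul, binPMF, mul_assoc]

/-- Hoeffding's inequality (part 2, convex order): for `X ~ PB(p_1, ..., p_n)`,
`p̄ = (p_1 + ... + p_n)/n` and `X̄ ~ Bin(n, p̄)`, for every `g : {0, ..., n} → ℝ`
which is discretely convex (`g(k+2) - 2 g(k+1) + g(k) > 0` for `0 ≤ k ≤ n - 2`),
one has `E[g(X)] ≤ E[g(X̄)]`, with equality iff `p_1 = ⋯ = p_n = p̄`. -/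
theorem hoeffding_inequality_part2 (n : ℕ) (p : Fin n → ℝ)
    (hp : ∀ i, 0 ≤ p i ∧ p i ≤ 1) (pbar : ℝ) (hpbar : pbar = (∑ i, p i) / n)
    (g : ℕ → ℝ) (hg : ∀ k : ℕ, k + 2 ≤ n → 0 < g (k + 2) - 2 * g (k + 1) + g k) :
    (∑ k ∈ Finset.range (n + 1), pbPMF n p k * g k) ≤
      (∑ k ∈ Finset.range (n + 1), binPMF n pbar k * g k) ∧
    ((∑ k ∈ Finset.range (n + 1), pbPMF n p k * g k) =
      (∑ k ∈ Finset.range (n + 1), binPMF n pbar k * g k) ↔ ∀ i, p i = pbar) := by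
  simp only [binPMF_eq_pbPMF_const, sum_pbPMF_mul_eq_pbExpect]
  by_cases hconst : ∀ i, p i = pbar
  · simp [show p = fun _ => pbar from funext hconst]
  obtain ⟨i, hi⟩ := not_forall.1 hconst
  have hmean : ∑ x, p x = Fintype.card (Fin n) * pbar := by
    rw [hpbar, Fintype.card_fin, mul_div_cancel₀ _ (Nat.cast_ne_zero.2 i.pos.ne')]
  have hlt := pbExpect_lt_pbExpect_const hp (fun k hk => hg k (by simpa using hk)) hmean ⟨i, hi⟩
  exact ⟨hlt.le, fun h => absurd h hlt.ne, fun h => absurd h hconst⟩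
end

section
/- Majorization and Poisson binomial tails (Gleser–Wang): Let X ~ PB(p_1,...,p_n) and X' ~ PB(p'_1,...,p'_n) with p̄ = (p_1+...+p_n)/n, and suppose (p_1,...,p_n) majorizes (p'_1,...,p'_n). Then P(X ≤ k) ≤ P(X' ≤ k) for all integers k with 0 ≤ k ≤ n·p̄ − 2, and P(X ≤ k) ≥ P(X' ≤ k) for all integers k with n·p̄ + 2 ≤ k ≤ n. Moreover Var(X) ≤ Var(X'). -/
/-!
Sort both vectors increasingly. The partial-sum inequalities then allow passing from `p` to `p'`
by finitely many Robin Hood transfers, each moving an amount `e ≥ 0` from a coordinate `j` to a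
coordinate `i` with `e ≤ p j - p i`. For one such transfer, `p i + p j` is fixed and `p i * p j`
grows by `c = e * (p j - p i - e) ≥ 0`. Conditioning on the two coordinates shows that
`P(X ≤ k)` changes by `c * (P(Y = k) - P(Y = k - 1))`, where `Y` is the Poisson binomial variable
of the other `n - 2` coordinates, with mean at least `𝔼 X - 2`; and `Var X = ∑ p i * (1 - p i)`
grows by `2c`.

The sign of `P(Y = k) - P(Y = k - 1)` comes from the monotonicity of a Poisson binomial pmf:
it increases up to the mean and decreases from the mean plus one on. To prove this, minimize
`P(X = k) - P(X = k - 1)` over `[0,1]^n` with the mean fixed, and among the minimizers maximize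
`∑ p i ^ 2`. At such a point all coordinates inside `(0, 1)` are equal, so `X` is a shifted
binomial variable, for which the claim is a ratio computation.
-/

open scoped BigOperators

/-- The cumulative distribution function `P(X ≤ k)` of a pmf on ℕ. -/
noncomputable def cdf (f : ℕ → ℝ) (k : ℕ) : ℝ :=
  ∑ i ∈ Finset.range (k + 1), f i

/-- The variance of a distribution supported on `{0, ..., n}` given by pmf `f`. -/
noncomputable def pmfVar (n : ℕ) (f : ℕ → ℝ) : ℝ :=
  (∑ k ∈ Finset.range (n + 1), (k : ℝ) ^ 2 * f k) -
    (∑ k ∈ Finset.range (n + 1), (k : ℝ) * f k) ^ 2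

/-- `x` majorizes `y`: denoting the increasing rearrangements by `x ∘ σ` and `y ∘ τ`,
the partial sums `Σ_{i=1}^k x_(i)` are at most `Σ_{i=1}^k y_(i)` for `k ≤ n - 1`, and
the total sums agree. -/
def Majorizes (n : ℕ) (x y : Fin n → ℝ) : Prop :=
  ∃ σ τ : Equiv.Perm (Fin n),
    Monotone (fun i => x (σ i)) ∧ Monotone (fun i => y (τ i)) ∧
    (∀ k : ℕ, k ≤ n - 1 →
      ∑ i ∈ Finset.univ.filter (fun i : Fin n => (i : ℕ) < k), x (σ i) ≤
        ∑ i ∈ Finset.univ.filter (fun i : Fin n => (i : ℕ) < k), y (τ i)) ∧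
    (∑ i, x i) = ∑ i, y i

open Finset Relation

namespace PoissonBinomial

variable {ι : Type*} [DecidableEq ι]

/-- `P(X = z)` for `X ~ PB((p i)_{i ∈ s})`, as a function of `z : ℤ` that vanishes outside
`[0, #s]`, so that shifts `z - 1` need no case split. -/
noncomputable def pb (s : Finset ι) (p : ι → ℝ) (z : ℤ) : ℝ :=
  ∑ A ∈ s.powerset with (#A : ℤ) = z, (∏ i ∈ A, p i) * ∏ i ∈ s \ A, (1 - p i)

variable {s : Finset ι} {p : ι → ℝ}

lemma pb_of_neg {z : ℤ} (hz : z < 0) : pb s p z = 0 :=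
  sum_eq_zero fun A hA => by have := (mem_filter.1 hA).2; omega

lemma pb_of_card_lt {z : ℤ} (hz : (#s : ℤ) < z) : pb s p z = 0 :=
  sum_eq_zero fun A hA => by
    obtain ⟨hAs, hAz⟩ := mem_filter.1 hA
    have := card_le_card (mem_powerset.1 hAs)
    omega

lemma pb_nonneg (hp : ∀ i ∈ s, p i ∈ Set.Icc 0 1) (z : ℤ) : 0 ≤ pb s p z :=
  sum_nonneg fun A hA => by
    have hAs := mem_powerset.1 (mem_filter.1 hA).1
    exact mul_nonneg (prod_nonneg fun i hi => (hp i (hAs hi)).1)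
      (prod_nonneg fun i hi => sub_nonneg.2 (hp i (mem_sdiff.1 hi).1).2)

lemma pb_congr {q : ι → ℝ} (h : ∀ i ∈ s, p i = q i) (z : ℤ) : pb s p z = pb s q z :=
  sum_congr rfl fun A hA => by
    have hAs := mem_powerset.1 (mem_filter.1 hA).1
    rw [prod_congr rfl fun i hi => h i (hAs hi),
      prod_congr rfl fun i hi => congrArg (1 - ·) (h i (mem_sdiff.1 hi).1)]

lemma pb_empty (z : ℤ) : pb (∅ : Finset ι) p z = if z = 0 then 1 else 0 := by
  simp only [pb, powerset_empty, filter_singleton, card_empty, Nat.cast_zero,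
    eq_comm (a := (0 : ℤ))]
  split_ifs <;> simp

lemma pb_insert {a : ι} (ha : a ∉ s) (z : ℤ) :
    pb (insert a s) p z = (1 - p a) * pb s p z + p a * pb s p (z - 1) := by
  simp only [pb, sum_filter, sum_powerset_insert ha, mul_sum]
  congr 1 <;> refine sum_congr rfl fun A hA => ?_
  · have haA : a ∉ A := fun h => ha (mem_powerset.1 hA h)
    rw [insert_sdiff_of_notMem _ haA, prod_insert fun h => ha (mem_sdiff.1 h).1]
    split_ifs <;> ring
  · have haA : a ∉ A := fun h => ha (mem_powerset.1 hA h)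
    rw [card_insert_of_notMem haA, insert_sdiff_insert, sdiff_insert_of_notMem ha,
      prod_insert haA, Nat.cast_succ]
    simp only [← eq_sub_iff_add_eq]
    split_ifs <;> ring

lemma pb_erase {a : ι} (ha : a ∈ s) (z : ℤ) :
    pb s p z = (1 - p a) * pb (s.erase a) p z + p a * pb (s.erase a) p (z - 1) := by
  rw [← pb_insert (notMem_erase a s), insert_erase ha]

lemma pb_pair {i j : ι} (hi : i ∈ s) (hj : j ∈ s) (hij : i ≠ j) (z : ℤ) :
    pb s p z = (1 - p i) * (1 - p j) * pb ((s.erase i).erase j) p z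
      + (p i * (1 - p j) + p j * (1 - p i)) * pb ((s.erase i).erase j) p (z - 1)
      + p i * p j * pb ((s.erase i).erase j) p (z - 2) := by
  have hj' : j ∈ s.erase i := mem_erase.2 ⟨hij.symm, hj⟩
  rw [pb_erase hi z, pb_erase hj' z, pb_erase hj' (z - 1), sub_sub, one_add_one_eq_two]
  ring

lemma pb_one_sub (z : ℤ) : pb s (fun i => 1 - p i) (#s - z) = pb s p z := by
  rcases lt_or_ge z 0 with hz | hz
  · rw [pb_of_neg hz, pb_of_card_lt (by omega)]
  rcases lt_or_ge (#s : ℤ) z with hzs | hzs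
  · rw [pb_of_card_lt hzs, pb_of_neg (by omega)]
  refine sum_nbij' (s \ ·) (s \ ·) ?_ ?_ ?_ ?_ ?_ <;> simp only [mem_filter, mem_powerset]
  · rintro A ⟨hAs, hA⟩
    exact ⟨sdiff_subset, by rw [card_sdiff_of_subset hAs]; omega⟩
  · rintro A ⟨hAs, hA⟩
    exact ⟨sdiff_subset, by rw [card_sdiff_of_subset hAs]; omega⟩
  · exact fun A hA => Finset.sdiff_sdiff_eq_self hA.1
  · exact fun A hA => Finset.sdiff_sdiff_eq_self hA.1
  · intro A hA
    rw [Finset.sdiff_sdiff_eq_self hA.1, mul_comm]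
    simp only [sub_sub_cancel]

lemma pb_comp_perm [Fintype ι] (σ : Equiv.Perm ι) (z : ℤ) :
    pb univ (p ∘ σ) z = pb univ p z := by
  refine sum_nbij' (map σ.toEmbedding) (map σ.symm.toEmbedding) ?_ ?_ ?_ ?_ ?_
  · simp
  · simp
  · simp [Finset.map_map]
  · simp [Finset.map_map]
  · intro A _
    conv_rhs => rw [← map_univ_equiv σ, ← Finset.map_sdiff, prod_map, prod_map]
    rfl

lemma continuous_pb (s : Finset ι) (z : ℤ) : Continuous fun q : ι → ℝ => pb s q z := by
  unfold pb; fun_prop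

lemma pbPMF_eq_pb {n : ℕ} (p : Fin n → ℝ) (k : ℕ) :
    pbPMF n p k = pb univ p k := by
  simp only [pbPMF, PoissonBinomial.pb, powersetCard_eq_filter, Nat.cast_inj, compl_eq_univ_sdiff]

lemma pbPMF_comp_perm {n : ℕ} (p : Fin n → ℝ) (σ : Equiv.Perm (Fin n)) :
    pbPMF n (fun i => p (σ i)) = pbPMF n p := by
  ext k
  rw [pbPMF_eq_pb, pbPMF_eq_pb]
  exact pb_comp_perm σ k

noncomputable def pbExpect (s : Finset ι) (p : ι → ℝ) (f : ℕ → ℝ) : ℝ :=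
  ∑ k ∈ range (#s + 1), f k * pb s p k

lemma pbExpect_add (f g : ℕ → ℝ) :
    pbExpect s p (fun k => f k + g k) = pbExpect s p f + pbExpect s p g := by
  simp only [pbExpect, add_mul, sum_add_distrib]

lemma pbExpect_const_mul (c : ℝ) (f : ℕ → ℝ) :
    pbExpect s p (fun k => c * f k) = c * pbExpect s p f := by
  simp only [pbExpect, mul_sum, mul_assoc]

lemma pbExpect_insert {a : ι} (ha : a ∉ s) (f : ℕ → ℝ) :
    pbExpect (insert a s) p f
      = (1 - p a) * pbExpect s p f + p a * pbExpect s p (fun k => f (k + 1)) := by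
  simp only [pbExpect, card_insert_of_notMem ha, pb_insert ha, mul_add, sum_add_distrib, mul_sum]
  congr 1
  · rw [sum_range_succ, pb_of_card_lt (by push_cast; omega)]
    simp only [mul_zero, add_zero, mul_left_comm]
  · rw [sum_range_succ', pb_of_neg (by norm_num)]
    simp only [mul_zero, add_zero, mul_left_comm, Nat.cast_succ, add_sub_cancel_right]

lemma pbExpect_one : pbExpect s p (fun _ => 1) = 1 := by
  induction s using Finset.induction_on with
  | empty => simp [pbExpect, pb_empty]
  | insert a s ha ih => rw [pbExpect_insert ha, ih]; ring

lemma pbExpect_id : pbExpect s p (fun k => k) = ∑ i ∈ s, p i := by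
  induction s using Finset.induction_on with
  | empty => simp [pbExpect, pb_empty]
  | insert a s ha ih =>
    simp only [pbExpect_insert ha, Nat.cast_succ, pbExpect_add, ih, pbExpect_one, sum_insert ha]
    ring

lemma pbExpect_sq : pbExpect s p (fun k => (k : ℝ) ^ 2)
    = (∑ i ∈ s, p i) ^ 2 + ∑ i ∈ s, p i * (1 - p i) := by
  induction s using Finset.induction_on with
  | empty => simp [pbExpect, pb_empty]
  | insert a s ha ih =>
    simp only [pbExpect_insert ha, Nat.cast_succ, add_sq, mul_one, one_pow, pbExpect_add,
      pbExpect_const_mul, ih, pbExpect_id, pbExpect_one, sum_insert ha]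
    ring

lemma pmfVar_pbPMF {n : ℕ} (p : Fin n → ℝ) :
    pmfVar n (pbPMF n p) = ∑ i, p i * (1 - p i) := by
  have h (f : ℕ → ℝ) :
      ∑ k ∈ range (n + 1), f k * pbPMF n p k = pbExpect univ p f := by
    simp [pbExpect, pbPMF_eq_pb]
  rw [pmfVar, h, h (fun k => (k : ℝ)), pbExpect_sq, pbExpect_id]
  ring

lemma pb_eq_choose_mul {t : ℝ} (hp : ∀ i ∈ s, p i = t) (k : ℕ) :
    pb s p k = (#s).choose k * t ^ k * (1 - t) ^ (#s - k) := by
  simp only [pb, Nat.cast_inj, ← powersetCard_eq_filter]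
  rw [sum_congr rfl fun A hA => ?_, sum_const, card_powersetCard, nsmul_eq_mul, mul_assoc]
  obtain ⟨hAs, hA⟩ := mem_powersetCard.1 hA
  have h1 : ∏ i ∈ A, p i = t ^ k := by
    rw [prod_congr rfl fun i hi => hp i (hAs hi), prod_const, hA]
  have h2 : ∏ i ∈ s \ A, (1 - p i) = (1 - t) ^ (#s - k) := by
    rw [prod_congr rfl fun i hi => (by rw [hp i (mem_sdiff.1 hi).1] : 1 - p i = 1 - t),
      prod_const, card_sdiff_of_subset hAs, hA]
  rw [h1, h2]

lemma choose_mul_pow_mul_pow_le_succ {m k : ℕ} {t : ℝ} (ht : t ∈ Set.Icc 0 1)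
    (hk : (k + 1 : ℝ) ≤ t * m) :
    m.choose k * t ^ k * (1 - t) ^ (m - k)
      ≤ m.choose (k + 1) * t ^ (k + 1) * (1 - t) ^ (m - (k + 1)) := by
  obtain ⟨ht0, ht1⟩ := ht
  have hkm : k + 1 ≤ m := by
    have : t * m ≤ m := mul_le_of_le_one_left (Nat.cast_nonneg m) ht1
    exact_mod_cast hk.trans this
  have hchoose : (m.choose (k + 1) : ℝ) * (k + 1) = m.choose k * (m - k) := by
    have h := congrArg (Nat.cast (R := ℝ)) (Nat.choose_succ_right_eq m k)
    push_cast [Nat.cast_sub (by omega : k ≤ m)] at h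
    exact h
  have hratio : (m.choose k : ℝ) * (1 - t) ≤ m.choose (k + 1) * t := by
    refine le_of_mul_le_mul_right ?_ (by positivity : (0 : ℝ) < k + 1)
    rw [mul_right_comm _ t, hchoose]
    have : (k + 1 : ℝ) * (1 - t) ≤ (m - k) * t := by nlinarith
    have : (0 : ℝ) ≤ m.choose k := Nat.cast_nonneg _
    nlinarith
  have hrest : 0 ≤ t ^ k * (1 - t) ^ (m - (k + 1)) := by
    have : 0 ≤ 1 - t := by linarith
    positivity
  calc (m.choose k : ℝ) * t ^ k * (1 - t) ^ (m - k)
      = (m.choose k * (1 - t)) * (t ^ k * (1 - t) ^ (m - (k + 1))) := by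
        rw [show m - k = m - (k + 1) + 1 by omega, pow_succ]; ring
    _ ≤ (m.choose (k + 1) * t) * (t ^ k * (1 - t) ^ (m - (k + 1))) :=
        mul_le_mul_of_nonneg_right hratio hrest
    _ = m.choose (k + 1) * t ^ (k + 1) * (1 - t) ^ (m - (k + 1)) := by ring

lemma pb_sub_one_le_of_forall_eq {t : ℝ} (ht : t ∈ Set.Icc 0 1) (hp : ∀ i ∈ s, p i = t)
    {z : ℤ} (hz : (z : ℝ) ≤ t * #s) : pb s p (z - 1) ≤ pb s p z := by
  rcases lt_or_ge z 1 with hz1 | hz1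
  · rw [pb_of_neg (by omega)]
    exact pb_nonneg (fun i hi => hp i hi ▸ ht) z
  obtain ⟨k, rfl⟩ : ∃ k : ℕ, z = k + 1 := ⟨(z - 1).toNat, by omega⟩
  rw [add_sub_cancel_right, ← Nat.cast_succ, pb_eq_choose_mul hp, pb_eq_choose_mul hp]
  exact choose_mul_pow_mul_pow_le_succ ht (by exact_mod_cast hz)

lemma pb_sub_one_le_of_mem_Ioo_eq (hp : ∀ i ∈ s, p i ∈ Set.Icc 0 1)
    (hint : ∀ i ∈ s, ∀ j ∈ s, p i ∈ Set.Ioo 0 1 → p j ∈ Set.Ioo 0 1 → p i = p j)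
    {z : ℤ} (hz : (z : ℝ) ≤ ∑ i ∈ s, p i) : pb s p (z - 1) ≤ pb s p z := by
  induction s using Finset.strongInduction generalizing z with
  | H s ih =>
    by_cases h01 : ∃ a ∈ s, p a = 0 ∨ p a = 1
    · obtain ⟨a, ha, h01⟩ := h01
      have ih' : ∀ {w : ℤ}, (w : ℝ) ≤ ∑ i ∈ s.erase a, p i →
          pb (s.erase a) p (w - 1) ≤ pb (s.erase a) p w :=
        ih _ (erase_ssubset ha) (fun i hi => hp i (mem_of_mem_erase hi))
        (fun i hi j hj => hint i (mem_of_mem_erase hi) j (mem_of_mem_erase hj))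
      have hsum := add_sum_erase s p ha
      rcases h01 with h0 | h1
      · simp only [pb_erase ha, h0, sub_zero, one_mul, zero_mul, add_zero]
        exact ih' (by linarith)
      · simp only [pb_erase ha, h1, sub_self, zero_mul, one_mul, zero_add]
        exact ih' (w := z - 1) (by push_cast; linarith)
    push Not at h01
    rcases s.eq_empty_or_nonempty with rfl | ⟨a, ha⟩
    · rw [sum_empty] at hz
      rw [pb_of_neg (by exact_mod_cast (by linarith : (z : ℝ) - 1 < 0))]
      exact pb_nonneg (by simp) z
    have hIoo : ∀ i ∈ s, p i ∈ Set.Ioo 0 1 := fun i hi =>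
      ⟨(hp i hi).1.lt_of_ne (h01 i hi).1.symm, (hp i hi).2.lt_of_ne (h01 i hi).2⟩
    have hconst : ∀ i ∈ s, p i = p a := fun i hi => hint i hi a ha (hIoo i hi) (hIoo a ha)
    refine pb_sub_one_le_of_forall_eq (hp a ha) hconst ?_
    rwa [sum_congr rfl hconst, sum_const, nsmul_eq_mul, mul_comm] at hz

def transfer (x : ι → ℝ) (i j : ι) (e : ℝ) : ι → ℝ :=
  x + Pi.single i e - Pi.single j e

section transfer

variable {x : ι → ℝ} {i j : ι} {e : ℝ}

lemma transfer_apply_left (hij : i ≠ j) : transfer x i j e i = x i + e := by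
  simp [transfer, hij]

lemma transfer_apply_right (hij : i ≠ j) : transfer x i j e j = x j - e := by
  simp [transfer, hij.symm]

lemma transfer_apply_of_ne {l : ι} (hi : l ≠ i) (hj : l ≠ j) : transfer x i j e l = x l := by
  simp [transfer, hi, hj]

lemma sum_eq_add_add_sum_erase_erase (f : ι → ℝ) (hi : i ∈ s) (hj : j ∈ s)
    (hij : i ≠ j) :
    ∑ l ∈ s, f l = f i + f j + ∑ l ∈ (s.erase i).erase j, f l := by
  rw [← add_sum_erase s f hi, ← add_sum_erase (s.erase i) f (mem_erase.2 ⟨hij.symm, hj⟩),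
    add_assoc]

lemma transfer_apply_of_mem_erase_erase {l : ι} (hl : l ∈ (s.erase i).erase j) :
    transfer x i j e l = x l :=
  transfer_apply_of_ne (ne_of_mem_erase (mem_of_mem_erase hl)) (ne_of_mem_erase hl)

lemma sum_transfer (hi : i ∈ s) (hj : j ∈ s) (hij : i ≠ j) :
    ∑ l ∈ s, transfer x i j e l = ∑ l ∈ s, x l := by
  rw [sum_eq_add_add_sum_erase_erase _ hi hj hij, sum_eq_add_add_sum_erase_erase x hi hj hij,
    sum_congr rfl fun l => transfer_apply_of_mem_erase_erase, transfer_apply_left hij,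
    transfer_apply_right hij]
  ring

lemma sum_sq_transfer (hi : i ∈ s) (hj : j ∈ s) (hij : i ≠ j) :
    ∑ l ∈ s, transfer x i j e l ^ 2 = ∑ l ∈ s, x l ^ 2 - 2 * e * (x j - x i - e) := by
  rw [sum_eq_add_add_sum_erase_erase _ hi hj hij, sum_eq_add_add_sum_erase_erase _ hi hj hij,
    sum_congr rfl fun l hl => by rw [transfer_apply_of_mem_erase_erase hl],
    transfer_apply_left hij, transfer_apply_right hij]
  ring

/-- `e * (x j - x i - e)` is the increase of `x i * x j`: with `x i + x j` fixed, the law of `X`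
is affine in this product. -/
lemma pb_transfer_sub (hi : i ∈ s) (hj : j ∈ s) (hij : i ≠ j) (z : ℤ) :
    pb s (transfer x i j e) z - pb s x z = e * (x j - x i - e) *
      (pb ((s.erase i).erase j) x z - 2 * pb ((s.erase i).erase j) x (z - 1)
        + pb ((s.erase i).erase j) x (z - 2)) := by
  have hrest (w : ℤ) : pb ((s.erase i).erase j) (transfer x i j e) w
      = pb ((s.erase i).erase j) x w :=
    pb_congr (fun l => transfer_apply_of_mem_erase_erase) w
  rw [pb_pair hi hj hij, pb_pair (p := x) hi hj hij, hrest, hrest, hrest,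
    transfer_apply_left hij, transfer_apply_right hij]
  ring

end transfer

/-- Otherwise moving `q i` and `q j` apart slightly would keep `q` a minimizer, since by
`pb_transfer_sub` the objective is affine in `q i * q j` with a coefficient that minimality forces
to vanish, and would increase `∑ l ∈ s, q l ^ 2`. -/
lemma not_lt_of_isMinOn_of_isMaxOn {q : ι → ℝ} {c : ℝ} {z : ℤ}
    (hmin : IsMinOn (fun r => pb s r z - pb s r (z - 1))
      (Set.univ.pi (fun _ => Set.Icc 0 1) ∩ {r | ∑ l ∈ s, r l = c}) q)
    (hmax : IsMaxOn (fun r => ∑ l ∈ s, r l ^ 2)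
      (Set.univ.pi (fun _ => Set.Icc 0 1) ∩ {r | ∑ l ∈ s, r l = c} ∩
        {r | pb s r z - pb s r (z - 1) = pb s q z - pb s q (z - 1)}) q)
    (hq : ∀ l, q l ∈ Set.Icc 0 1) (hqc : ∑ l ∈ s, q l = c) {i j : ι}
    (hi : i ∈ s) (hj : j ∈ s) (hqi : 0 < q i) (hqj : q j < 1) : ¬ q i < q j := by
  intro hlt
  have hij : i ≠ j := by rintro rfl; exact lt_irrefl _ hlt
  set B := (pb ((s.erase i).erase j) q z - 2 * pb ((s.erase i).erase j) q (z - 1)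
      + pb ((s.erase i).erase j) q (z - 2)) - (pb ((s.erase i).erase j) q (z - 1)
      - 2 * pb ((s.erase i).erase j) q (z - 1 - 1) + pb ((s.erase i).erase j) q (z - 1 - 2))
  have hF (e : ℝ) : pb s (transfer q i j e) z - pb s (transfer q i j e) (z - 1)
      = pb s q z - pb s q (z - 1) + e * (q j - q i - e) * B := by
    have h1 := pb_transfer_sub (x := q) (e := e) hi hj hij z
    have h2 := pb_transfer_sub (x := q) (e := e) hi hj hij (z - 1)
    linear_combination h1 - h2
  have hmem (e : ℝ) (hei : q i + e ∈ Set.Icc 0 1) (hej : q j - e ∈ Set.Icc 0 1) :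
      transfer q i j e ∈ Set.univ.pi (fun _ => Set.Icc 0 1) ∩ {r | ∑ l ∈ s, r l = c} := by
    refine ⟨Set.mem_univ_pi.2 fun l => ?_, (sum_transfer hi hj hij).trans hqc⟩
    by_cases hli : l = i
    · rwa [hli, transfer_apply_left hij]
    by_cases hlj : l = j
    · rwa [hlj, transfer_apply_right hij]
    rw [transfer_apply_of_ne hli hlj]
    exact hq l
  obtain ⟨hqi0, hqi1⟩ := hq i
  obtain ⟨hqj0, hqj1⟩ := hq j
  have hB_nonneg : 0 ≤ B := by
    have h := isMinOn_iff.1 hmin _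
      (hmem ((q j - q i) / 2) ⟨by linarith, by linarith⟩ ⟨by linarith, by linarith⟩)
    rw [hF] at h
    have hc : 0 < (q j - q i) / 2 * (q j - q i - (q j - q i) / 2) := by nlinarith
    nlinarith
  set ε := min (q i) (1 - q j)
  have hε : 0 < ε := lt_min hqi (by linarith)
  have hεi : ε ≤ q i := min_le_left _ _
  have hεj : ε ≤ 1 - q j := min_le_right _ _
  have hmemε := hmem (-ε) ⟨by linarith, by linarith⟩ ⟨by linarith, by linarith⟩
  have hB_nonpos : B ≤ 0 := by
    have h := isMinOn_iff.1 hmin _ hmemε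
    rw [hF] at h
    have hc : 0 < ε * (q j - q i + ε) := by nlinarith
    nlinarith
  have h := isMaxOn_iff.1 hmax _
    ⟨hmemε, by rw [Set.mem_ofPred_eq, hF, le_antisymm hB_nonpos hB_nonneg, mul_zero, add_zero]⟩
  rw [sum_sq_transfer hi hj hij] at h
  nlinarith

theorem pb_sub_one_le_of_le_sum (hp : ∀ i, p i ∈ Set.Icc 0 1) {z : ℤ}
    (hz : (z : ℝ) ≤ ∑ i ∈ s, p i) : pb s p (z - 1) ≤ pb s p z := by
  set K := Set.univ.pi (fun _ => Set.Icc (0 : ℝ) 1) ∩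
    {r : ι → ℝ | ∑ l ∈ s, r l = ∑ l ∈ s, p l}
  set F := fun r : ι → ℝ => pb s r z - pb s r (z - 1)
  have hK : IsCompact K := (isCompact_univ_pi fun _ => isCompact_Icc).inter_right
    (isClosed_eq (continuous_finsetSum s fun l _ => continuous_apply l) continuous_const)
  have hF : Continuous F := (continuous_pb s z).sub (continuous_pb s (z - 1))
  have hpK : p ∈ K := ⟨Set.mem_univ_pi.2 hp, rfl⟩
  obtain ⟨q₀, hq₀K, hq₀⟩ := hK.exists_isMinOn ⟨p, hpK⟩ hF.continuousOn
  have hG : Continuous fun r : ι → ℝ => ∑ l ∈ s, r l ^ 2 :=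
    continuous_finsetSum s fun l _ => (continuous_apply l).pow 2
  obtain ⟨q, ⟨hqK, hqF⟩, hqG⟩ :=
    (hK.inter_right (isClosed_eq hF continuous_const)).exists_isMaxOn ⟨q₀, hq₀K, rfl⟩
      hG.continuousOn
  have hqF : F q = F q₀ := hqF
  have hqmin : IsMinOn F K q := isMinOn_iff.2 fun r hr => hqF ▸ isMinOn_iff.1 hq₀ r hr
  rw [← hqF] at hqG
  have hq := Set.mem_univ_pi.1 hqK.1
  have hint : ∀ i ∈ s, ∀ j ∈ s, q i ∈ Set.Ioo 0 1 → q j ∈ Set.Ioo 0 1 → q i = q j :=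
    fun i hi j hj hqi hqj => le_antisymm
      (not_lt.1 (not_lt_of_isMinOn_of_isMaxOn hqmin hqG hq hqK.2 hj hi hqj.1 hqi.2))
      (not_lt.1 (not_lt_of_isMinOn_of_isMaxOn hqmin hqG hq hqK.2 hi hj hqi.1 hqj.2))
  have hq_nonneg : 0 ≤ F q :=
    sub_nonneg.2 (pb_sub_one_le_of_mem_Ioo_eq (fun i _ => hq i) hint (hqK.2 ▸ hz))
  exact sub_nonneg.1 (hq_nonneg.trans (hqmin hpK))

theorem pb_le_sub_one_of_sum_add_one_le (hp : ∀ i, p i ∈ Set.Icc 0 1) {z : ℤ}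
    (hz : ∑ i ∈ s, p i + 1 ≤ z) : pb s p z ≤ pb s p (z - 1) := by
  have h := pb_sub_one_le_of_le_sum (s := s) (z := #s - z + 1)
    (fun i => ⟨sub_nonneg.2 (hp i).2, sub_le_self _ (hp i).1⟩)
    (by push_cast [sum_sub_distrib, sum_const, nsmul_eq_mul]; linarith)
  rwa [add_sub_cancel_right, show (#s : ℤ) - z + 1 = #s - (z - 1) by ring, pb_one_sub,
    pb_one_sub] at h

def IsRobinHood (x y : ι → ℝ) : Prop :=
  ∃ i j e, i ≠ j ∧ 0 ≤ e ∧ e ≤ x j - x i ∧ y = transfer x i j e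

namespace IsRobinHood

variable {x y : ι → ℝ}

lemma mem_Icc (h : IsRobinHood x y) (hx : ∀ l, x l ∈ Set.Icc 0 1) (l : ι) :
    y l ∈ Set.Icc 0 1 := by
  obtain ⟨i, j, e, hij, he0, he1, rfl⟩ := h
  obtain ⟨hxi0, hxi1⟩ := hx i
  obtain ⟨hxj0, hxj1⟩ := hx j
  by_cases hli : l = i
  · rw [hli, transfer_apply_left hij]; constructor <;> linarith
  by_cases hlj : l = j
  · rw [hlj, transfer_apply_right hij]; constructor <;> linarith
  rw [transfer_apply_of_ne hli hlj]
  exact hx l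

variable [Fintype ι]

lemma sum_eq (h : IsRobinHood x y) : ∑ l, y l = ∑ l, x l := by
  obtain ⟨i, j, e, hij, -, -, rfl⟩ := h
  exact sum_transfer (mem_univ i) (mem_univ j) hij

lemma sum_sq_le (h : IsRobinHood x y) : ∑ l, y l ^ 2 ≤ ∑ l, x l ^ 2 := by
  obtain ⟨i, j, e, hij, he0, he1, rfl⟩ := h
  rw [sum_sq_transfer (mem_univ i) (mem_univ j) hij]
  nlinarith

end IsRobinHood

section ReflTransGen

variable {x y : ι → ℝ}

lemma mem_Icc_of_reflTransGen (h : ReflTransGen IsRobinHood x y)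
    (hx : ∀ l, x l ∈ Set.Icc 0 1) : ∀ l, y l ∈ Set.Icc 0 1 := by
  induction h with
  | refl => exact hx
  | tail _ hyz ih => exact hyz.mem_Icc ih

variable [Fintype ι]

lemma sum_eq_of_reflTransGen (h : ReflTransGen IsRobinHood x y) : ∑ l, y l = ∑ l, x l := by
  induction h with
  | refl => rfl
  | tail _ hyz ih => exact hyz.sum_eq.trans ih

lemma sum_sq_le_of_reflTransGen (h : ReflTransGen IsRobinHood x y) :
    ∑ l, y l ^ 2 ≤ ∑ l, x l ^ 2 := by
  induction h with
  | refl => rfl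
  | tail _ hyz ih => exact hyz.sum_sq_le.trans ih

end ReflTransGen

lemma sum_range_second_diff (H : ℤ → ℝ) (h1 : H (-1) = 0) (h2 : H (-2) = 0) (k : ℕ) :
    ∑ m ∈ range (k + 1), (H m - 2 * H (m - 1) + H (m - 2)) = H k - H (k - 1) := by
  induction k with
  | zero => simp [h1, h2]
  | succ k ih =>
    rw [sum_range_succ, ih, Nat.cast_succ, add_sub_cancel_right,
      show (k : ℤ) + 1 - 2 = k - 1 by ring]
    ring

section cdf

variable {n : ℕ} {x : Fin n → ℝ} {i j : Fin n} {e : ℝ}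

lemma cdf_transfer_sub (hij : i ≠ j) (k : ℕ) :
    cdf (pbPMF n (transfer x i j e)) k - cdf (pbPMF n x) k = e * (x j - x i - e) *
      (pb ((univ.erase i).erase j) x k - pb ((univ.erase i).erase j) x (k - 1)) := by
  simp only [cdf, ← sum_sub_distrib, pbPMF_eq_pb,
    pb_transfer_sub (mem_univ i) (mem_univ j) hij, ← mul_sum]
  rw [sum_range_second_diff _ (pb_of_neg (by norm_num)) (pb_of_neg (by norm_num))]

lemma IsRobinHood.cdf_le {y : Fin n → ℝ} (h : IsRobinHood x y) (hx : ∀ l, x l ∈ Set.Icc 0 1)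
    {k : ℕ} (hk : (k : ℝ) + 2 ≤ ∑ l, x l) : cdf (pbPMF n x) k ≤ cdf (pbPMF n y) k := by
  obtain ⟨i, j, e, hij, he0, he1, rfl⟩ := h
  rw [sum_eq_add_add_sum_erase_erase x (mem_univ i) (mem_univ j) hij] at hk
  have hmono := pb_sub_one_le_of_le_sum hx (s := (univ.erase i).erase j) (z := k)
    (by push_cast; linarith [(hx i).2, (hx j).2])
  have hdiff := cdf_transfer_sub (x := x) (e := e) hij k
  have hc : 0 ≤ e * (x j - x i - e) := mul_nonneg he0 (by linarith)
  nlinarith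

lemma IsRobinHood.cdf_ge {y : Fin n → ℝ} (h : IsRobinHood x y) (hx : ∀ l, x l ∈ Set.Icc 0 1)
    {k : ℕ} (hk : ∑ l, x l + 2 ≤ k) : cdf (pbPMF n y) k ≤ cdf (pbPMF n x) k := by
  obtain ⟨i, j, e, hij, he0, he1, rfl⟩ := h
  rw [sum_eq_add_add_sum_erase_erase x (mem_univ i) (mem_univ j) hij] at hk
  have hmono := pb_le_sub_one_of_sum_add_one_le hx (s := (univ.erase i).erase j) (z := k)
    (by push_cast; linarith [(hx i).1, (hx j).1])
  have hdiff := cdf_transfer_sub (x := x) (e := e) hij k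
  have hc : 0 ≤ e * (x j - x i - e) := mul_nonneg he0 (by linarith)
  nlinarith

lemma cdf_le_of_reflTransGen {y : Fin n → ℝ} (h : ReflTransGen IsRobinHood x y)
    (hx : ∀ l, x l ∈ Set.Icc 0 1) {k : ℕ} (hk : (k : ℝ) + 2 ≤ ∑ l, x l) :
    cdf (pbPMF n x) k ≤ cdf (pbPMF n y) k := by
  induction h with
  | refl => rfl
  | tail hxy hyz ih =>
    exact ih.trans (hyz.cdf_le (mem_Icc_of_reflTransGen hxy hx)
      (sum_eq_of_reflTransGen hxy ▸ hk))

lemma cdf_ge_of_reflTransGen {y : Fin n → ℝ} (h : ReflTransGen IsRobinHood x y)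
    (hx : ∀ l, x l ∈ Set.Icc 0 1) {k : ℕ} (hk : ∑ l, x l + 2 ≤ k) :
    cdf (pbPMF n y) k ≤ cdf (pbPMF n x) k := by
  induction h with
  | refl => rfl
  | tail hxy hyz ih =>
    exact (hyz.cdf_ge (mem_Icc_of_reflTransGen hxy hx)
      (sum_eq_of_reflTransGen hxy ▸ hk)).trans ih

end cdf

section majorization

variable {n : ℕ} {x y : Fin n → ℝ}

def partialSum (x : Fin n → ℝ) (k : ℕ) : ℝ :=
  ∑ l ∈ univ.filter (fun l : Fin n => (l : ℕ) < k), x l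

lemma partialSum_succ (x : Fin n → ℝ) (i : Fin n) :
    partialSum x (i + 1) = partialSum x i + x i := by
  have h : univ.filter (fun l : Fin n => (l : ℕ) < i + 1)
      = insert i (univ.filter fun l : Fin n => (l : ℕ) < i) := by
    ext l
    simp only [mem_filter, mem_univ, true_and, mem_insert]
    omega
  rw [partialSum, partialSum, h, sum_insert (by simp), add_comm]

lemma partialSum_of_le {k : ℕ} (hk : n ≤ k) : partialSum x k = ∑ l, x l := by
  rw [partialSum, filter_true_of_mem fun l _ => by omega]

lemma partialSum_le_of_le_sub_one (hps : ∀ k ≤ n - 1, partialSum x k ≤ partialSum y k)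
    (hsum : ∑ l, x l = ∑ l, y l) (k : ℕ) : partialSum x k ≤ partialSum y k := by
  rcases le_or_gt k (n - 1) with hk | hk
  · exact hps k hk
  · rw [partialSum_of_le (by omega), partialSum_of_le (by omega), hsum]

lemma exists_first_deficit (hne : x ≠ y) (hps : ∀ k, partialSum x k ≤ partialSum y k) :
    ∃ i, x i < y i ∧ ∀ l < i, x l = y l := by
  obtain ⟨i, hi, hmin⟩ := wellFounded_lt.has_min {i | x i ≠ y i} (Function.ne_iff.1 hne)
  have hlow : ∀ l < i, x l = y l := fun l hl => not_not.1 fun h => hmin l h hl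
  have heq : partialSum x i = partialSum y i :=
    sum_congr rfl fun l hl => hlow l (mem_filter.1 hl).2
  have hle := hps (i + 1)
  rw [partialSum_succ, partialSum_succ, heq] at hle
  exact ⟨i, (add_le_add_iff_left _).1 hle |>.lt_of_ne hi, hlow⟩

lemma exists_first_surplus (hsum : ∑ l, x l = ∑ l, y l) {i : Fin n} (hi : x i < y i)
    (hlow : ∀ l < i, x l = y l) :
    ∃ j, i < j ∧ y j < x j ∧ ∀ l, i < l → l < j → x l ≤ y l := by
  have hS : {j | i < j ∧ y j < x j}.Nonempty := by
    by_contra hS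
    have hle : ∀ l ∈ univ, x l ≤ y l := fun l _ => by
      rcases lt_trichotomy l i with h | rfl | h
      · exact (hlow l h).le
      · exact hi.le
      · exact not_lt.1 fun h' => hS ⟨l, h, h'⟩
    exact (sum_lt_sum hle ⟨i, mem_univ i, hi⟩).ne hsum
  obtain ⟨j, ⟨hij, hj⟩, hmin⟩ := wellFounded_lt.has_min _ hS
  exact ⟨j, hij, hj, fun l hil hlj => not_lt.1 fun h => hmin l ⟨hil, h⟩ hlj⟩

lemma partialSum_transfer_le {i j : Fin n} {δ : ℝ} (hij : i < j) (hlow : ∀ l < i, x l = y l)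
    (hδ : x i + δ ≤ y i) (hmid : ∀ l, i < l → l < j → x l ≤ y l)
    (hps : ∀ k, partialSum x k ≤ partialSum y k) (k : ℕ) :
    partialSum (transfer x i j δ) k ≤ partialSum y k := by
  rcases le_or_gt k j with hkj | hjk
  · refine sum_le_sum fun l hl => ?_
    have hlj : l < j := by have := (mem_filter.1 hl).2; omega
    rcases lt_trichotomy l i with h | rfl | h
    · rw [transfer_apply_of_ne h.ne hlj.ne, hlow l h]
    · rwa [transfer_apply_left hij.ne]
    · rw [transfer_apply_of_ne h.ne' hlj.ne]
      exact hmid l h hlj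
  · rw [partialSum, sum_transfer (by simp; omega) (by simp; omega) hij.ne]
    exact hps k

lemma exists_isRobinHood_card_lt (hy : Monotone y) (hne : x ≠ y)
    (hps : ∀ k, partialSum x k ≤ partialSum y k) (hsum : ∑ l, x l = ∑ l, y l) :
    ∃ x', IsRobinHood x x' ∧ (∀ k, partialSum x' k ≤ partialSum y k) ∧
      ∑ l, x' l = ∑ l, y l ∧ #{l | x' l ≠ y l} < #{l | x l ≠ y l} := by
  obtain ⟨i, hi, hlow⟩ := exists_first_deficit hne hps
  obtain ⟨j, hij, hj, hmid⟩ := exists_first_surplus hsum hi hlow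
  set δ := min (y i - x i) (x j - y j)
  have hδi : x i + δ ≤ y i := by linarith [min_le_left (y i - x i) (x j - y j)]
  have hδj : y j ≤ x j - δ := by linarith [min_le_right (y i - x i) (x j - y j)]
  have hδ : 0 ≤ δ := le_min (by linarith) (by linarith)
  have hyij := hy hij.le
  refine ⟨transfer x i j δ, ⟨i, j, δ, hij.ne, hδ, by linarith, rfl⟩,
    partialSum_transfer_le hij hlow hδi hmid hps,
    (sum_transfer (mem_univ i) (mem_univ j) hij.ne).trans hsum,
    card_lt_card ((ssubset_iff_of_subset fun l => ?_).2 ?_)⟩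
  · simp only [mem_filter, mem_univ, true_and]
    intro hl
    by_cases hli : l = i
    · exact hli ▸ hi.ne
    by_cases hlj : l = j
    · exact hlj ▸ hj.ne'
    rwa [transfer_apply_of_ne hli hlj] at hl
  · simp only [mem_filter, mem_univ, true_and, not_not]
    rcases min_choice (y i - x i) (x j - y j) with h | h
    · exact ⟨i, hi.ne, by rw [transfer_apply_left hij.ne]; linarith⟩
    · exact ⟨j, hj.ne', by rw [transfer_apply_right hij.ne]; linarith⟩

theorem reflTransGen_isRobinHood_of_partialSum_le (hy : Monotone y)
    (hps : ∀ k, partialSum x k ≤ partialSum y k) (hsum : ∑ l, x l = ∑ l, y l) :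
    ReflTransGen IsRobinHood x y := by
  induction hN : #{l | x l ≠ y l} using Nat.strong_induction_on generalizing x with
  | _ N ih =>
    by_cases hne : x = y
    · exact hne ▸ .refl
    obtain ⟨x', hxx', hps', hsum', hcard⟩ := exists_isRobinHood_card_lt hy hne hps hsum
    exact .head hxx' (ih _ (hN ▸ hcard) hps' hsum' rfl)

end majorization

end PoissonBinomial

open PoissonBinomial

theorem gleser_wang_general (n : ℕ) (p p' : Fin n → ℝ)
    (hp : ∀ i, 0 ≤ p i ∧ p i ≤ 1)
    (pbar : ℝ) (hpbar : pbar = (∑ i, p i) / n)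
    (hmaj : Majorizes n p p') :
    (∀ k : ℕ, (k : ℝ) ≤ (n : ℝ) * pbar - 2 →
      cdf (pbPMF n p) k ≤ cdf (pbPMF n p') k) ∧
    (∀ k : ℕ, (n : ℝ) * pbar + 2 ≤ (k : ℝ) → k ≤ n →
      cdf (pbPMF n p') k ≤ cdf (pbPMF n p) k) ∧
    pmfVar n (pbPMF n p) ≤ pmfVar n (pbPMF n p') := by
  obtain ⟨σ, τ, -, hτ, hps, hsum⟩ := hmaj
  have hsumστ : ∑ l, p (σ l) = ∑ l, p' (τ l) := by
    rw [Equiv.sum_comp σ p, Equiv.sum_comp τ p', hsum]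
  have hchain : ReflTransGen IsRobinHood (fun l => p (σ l)) (fun l => p' (τ l)) :=
    reflTransGen_isRobinHood_of_partialSum_le hτ
      (partialSum_le_of_le_sub_one hps hsumστ) hsumστ
  have hbox : ∀ l, p (σ l) ∈ Set.Icc 0 1 := fun l => hp (σ l)
  have hmean : ∑ l, p (σ l) = n * pbar := by
    rcases Nat.eq_zero_or_pos n with rfl | hn
    · simp
    · rw [Equiv.sum_comp σ p, hpbar]
      field_simp
  refine ⟨fun k hk => ?_, fun k hk _ => ?_, ?_⟩
  · simpa only [pbPMF_comp_perm] using cdf_le_of_reflTransGen hchain hbox (by linarith)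
  · simpa only [pbPMF_comp_perm] using cdf_ge_of_reflTransGen hchain hbox (by linarith)
  · have hsq := sum_sq_le_of_reflTransGen hchain
    rw [Equiv.sum_comp σ (fun l => p l ^ 2), Equiv.sum_comp τ (fun l => p' l ^ 2)] at hsq
    simp only [pmfVar_pbPMF, mul_one_sub, sum_sub_distrib, ← sq, hsum]
    linarith

/-- Majorization and Poisson binomial tails (Gleser–Wang): if `X ~ PB(p_1, ..., p_n)`,
`X' ~ PB(p'_1, ..., p'_n)` and `(p_1, ..., p_n)` majorizes `(p'_1, ..., p'_n)`, then
`P(X ≤ k) ≤ P(X' ≤ k)` for `0 ≤ k ≤ n p̄ - 2`, `P(X ≤ k) ≥ P(X' ≤ k)` for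
`n p̄ + 2 ≤ k ≤ n`, and `Var(X) ≤ Var(X')`. -/
theorem gleser_wang (n : ℕ) (p p' : Fin n → ℝ)
    (hp : ∀ i, 0 ≤ p i ∧ p i ≤ 1) (hp' : ∀ i, 0 ≤ p' i ∧ p' i ≤ 1)
    (pbar : ℝ) (hpbar : pbar = (∑ i, p i) / n)
    (hmaj : Majorizes n p p') :
    (∀ k : ℕ, (k : ℝ) ≤ (n : ℝ) * pbar - 2 →
      cdf (pbPMF n p) k ≤ cdf (pbPMF n p') k) ∧
    (∀ k : ℕ, (n : ℝ) * pbar + 2 ≤ (k : ℝ) → k ≤ n →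
      cdf (pbPMF n p') k ≤ cdf (pbPMF n p) k) ∧
    pmfVar n (pbPMF n p) ≤ pmfVar n (pbPMF n p') :=
  gleser_wang_general n p p' hp pbar hpbar hmaj
end

section
/- Log-majorization and stochastic ordering (Proschan–Proschan): Let X ~ PB(p_1,...,p_n) and X' ~ PB(p'_1,...,p'_n) with all p_i, p'_i ∈ (0,1]. If (−log p_1, ..., −log p_n) majorizes (−log p'_1, ..., −log p'_n), then X is stochastically larger than X', i.e. P(X ≥ k) ≥ P(X' ≥ k) for every integer k. -/
open scoped BigOperators

/-- The tail probability `P(X ≥ k)` of a distribution supported on `{0, ..., n}`. -/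
noncomputable def tailProb (n : ℕ) (f : ℕ → ℝ) (k : ℕ) : ℝ :=
  ∑ i ∈ Finset.Icc k n, f i

/-!
Put `x_i = -log p_i`. A transfer `x ↦ x + δ e_a - δ e_b` with `x_a + δ ≤ x_b - δ` turns `p`
into `q` with `q_a q_b = p_a p_b` and, by convexity of `exp`, `q_a + q_b ≤ p_a + p_b`. The
generating function of `PB(p)` sees `(p_a, p_b)` only through the factor
`(p_a X + 1 - p_a)(p_b X + 1 - p_b)`, so passing to `q` lowers it by
`(p_a + p_b - q_a - q_b) (X - 1) R` where `R` has nonnegative coefficients; the tail sums of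
`(X - 1) R` telescope to a coefficient of `R`, so every tail probability decreases. Finally, as
in the proof of the Hardy–Littlewood–Pólya theorem, a majorizing vector is carried to the
majorized one by finitely many such transfers, each making one more coordinate agree.
-/

open Finset Polynomial Real

section Transfer

variable {ι : Type*} [DecidableEq ι]

def transfer (x : ι → ℝ) (a b : ι) (δ : ℝ) : ι → ℝ :=
  x + Pi.single a δ - Pi.single b δ

variable {x : ι → ℝ} {a b : ι} {δ : ℝ}

theorem transfer_apply_left (hab : a ≠ b) : transfer x a b δ a = x a + δ := by
  simp [transfer, hab]

theorem transfer_apply_right (hab : a ≠ b) : transfer x a b δ b = x b - δ := by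
  simp [transfer, hab.symm]

theorem transfer_apply_of_ne {i : ι} (hia : i ≠ a) (hib : i ≠ b) : transfer x a b δ i = x i := by
  simp [transfer, hia, hib]

theorem sum_transfer (s : Finset ι) :
    ∑ i ∈ s, transfer x a b δ i =
      ∑ i ∈ s, x i + (if a ∈ s then δ else 0) - (if b ∈ s then δ else 0) := by
  simp [transfer, sum_add_distrib, sum_sub_distrib, sum_pi_single']

theorem sum_transfer_univ [Fintype ι] : ∑ i, transfer x a b δ i = ∑ i, x i := by
  simp [sum_transfer]

theorem transfer_nonneg (hx : 0 ≤ x) (hab : a ≠ b) (hδ : 0 ≤ δ) (h : x a + δ ≤ x b - δ) :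
    0 ≤ transfer x a b δ := fun i => by
  have hxa : 0 ≤ x a := hx a
  rw [Pi.zero_apply]
  by_cases hia : i = a
  · rw [hia, transfer_apply_left hab]
    linarith
  by_cases hib : i = b
  · rw [hib, transfer_apply_right hab]
    linarith
  exact transfer_apply_of_ne hia hib ▸ hx i

theorem card_transfer_ne_lt [Fintype ι] {y : ι → ℝ} (hab : a ≠ b) (ha : x a ≠ y a)
    (hb : x b ≠ y b) (hδ : x a + δ = y a ∨ x b - δ = y b) :
    (univ.filter fun i => transfer x a b δ i ≠ y i).card <
      (univ.filter fun i => x i ≠ y i).card := by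
  refine card_lt_card ((ssubset_iff_of_subset fun i => ?_).2 ?_)
  · simp only [mem_filter, mem_univ, true_and]
    intro hi
    by_cases hia : i = a
    · exact hia ▸ ha
    by_cases hib : i = b
    · exact hib ▸ hb
    rwa [transfer_apply_of_ne hia hib] at hi
  · rcases hδ with h | h
    · exact ⟨a, by simpa using ha, by simp [transfer_apply_left hab, h]⟩
    · exact ⟨b, by simpa using hb, by simp [transfer_apply_right hab, h]⟩

end Transfer

section GeneratingFunction

variable {ι : Type*} [DecidableEq ι]

/-- The probability generating function of `PB((p i)_{i ∈ s})`. -/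
noncomputable def pbPoly (p : ι → ℝ) (s : Finset ι) : ℝ[X] :=
  ∏ i ∈ s, (C (p i) * X + C (1 - p i))

theorem coeff_pbPoly (p : ι → ℝ) (s : Finset ι) (k : ℕ) :
    (pbPoly p s).coeff k =
      ∑ A ∈ s.powersetCard k, (∏ i ∈ A, p i) * ∏ i ∈ s \ A, (1 - p i) := by
  simp only [pbPoly, prod_add, prod_mul_distrib, prod_const, ← map_prod, finsetSum_coeff,
    mul_right_comm _ (X ^ _), ← C_mul, coeff_C_mul_X_pow, powersetCard_eq_filter, sum_filter]
  exact sum_congr rfl fun A _ => by split_ifs <;> simp_all [eq_comm]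

theorem coeff_pbPoly_nonneg {p : ι → ℝ} {s : Finset ι} (hp : ∀ i ∈ s, 0 ≤ p i ∧ p i ≤ 1)
    (k : ℕ) : 0 ≤ (pbPoly p s).coeff k := by
  rw [coeff_pbPoly]
  refine sum_nonneg fun A hA => mul_nonneg (prod_nonneg fun i hi => ?_) (prod_nonneg fun i hi => ?_)
  · exact (hp i (mem_powersetCard.1 hA |>.1 hi)).1
  · exact sub_nonneg.2 (hp i (mem_sdiff.1 hi).1).2

theorem coeff_pbPoly_of_card_lt (p : ι → ℝ) {s : Finset ι} {k : ℕ} (h : s.card < k) :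
    (pbPoly p s).coeff k = 0 := by
  rw [coeff_pbPoly, powersetCard_eq_empty.2 h, sum_empty]

/-- Only the two factors at `a` and `b` differ, and they depend on `p a, p b` only through
their product and their sum. -/
theorem pbPoly_sub_pbPoly {p q : ι → ℝ} {s : Finset ι} {a b : ι} (ha : a ∈ s) (hb : b ∈ s)
    (hab : a ≠ b) (hpq : ∀ i, i ≠ a → i ≠ b → q i = p i) (hprod : q a * q b = p a * p b) :
    pbPoly p s - pbPoly q s =
      C (p a + p b - (q a + q b)) * ((X - 1) * pbPoly p ((s.erase a).erase b)) := by
  have hb' : b ∈ s.erase a := mem_erase.2 ⟨hab.symm, hb⟩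
  have hrest : pbPoly q ((s.erase a).erase b) = pbPoly p ((s.erase a).erase b) :=
    prod_congr rfl fun i hi => by
      obtain ⟨hib, hia, -⟩ : i ≠ b ∧ i ≠ a ∧ i ∈ s := by simpa using hi
      rw [hpq i hia hib]
  simp only [pbPoly] at hrest ⊢
  rw [← mul_prod_erase s _ ha, ← mul_prod_erase (s.erase a) _ hb', ← mul_prod_erase s _ ha,
    ← mul_prod_erase (s.erase a) _ hb', hrest]
  generalize ∏ i ∈ (s.erase a).erase b, (C (p i) * X + C (1 - p i)) = R
  have hC : C (q a) * C (q b) = C (p a) * C (p b) := by rw [← C_mul, ← C_mul, hprod]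
  simp only [C_sub, C_add, C_1]
  linear_combination (-(X - 1) ^ 2 * R) * hC

theorem pbPMF_eq_coeff (n : ℕ) (p : Fin n → ℝ) (k : ℕ) :
    pbPMF n p k = (pbPoly p univ).coeff k := by
  simp only [pbPMF, coeff_pbPoly, compl_eq_univ_sdiff]

theorem pbPMF_comp_perm (n : ℕ) (p : Fin n → ℝ) (σ : Equiv.Perm (Fin n)) (k : ℕ) :
    pbPMF n (p ∘ σ) k = pbPMF n p k := by
  rw [pbPMF_eq_coeff, pbPMF_eq_coeff, pbPoly, pbPoly]
  exact congrArg (coeff · k) (Equiv.prod_comp σ fun i => C (p i) * X + C (1 - p i))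

end GeneratingFunction

theorem sum_Icc_coeff_X_sub_one_mul_nonneg {S : Type*} [Ring S] [PartialOrder S]
    [IsOrderedAddMonoid S] {R : S[X]} (hR : ∀ i, 0 ≤ R.coeff i) {n : ℕ} (hn : R.coeff n = 0)
    (k : ℕ) : 0 ≤ ∑ i ∈ Icc k n, ((X - 1) * R).coeff i := by
  rcases lt_or_ge n k with hnk | hkn
  · simp [Icc_eq_empty_of_lt hnk]
  have hXR : 0 ≤ (X * R).coeff k := by
    cases k with
    | zero => simp
    | succ k => simpa only [coeff_X_mul] using hR k
  have htelescope (i : ℕ) :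
      ((X - 1) * R).coeff i = -(X * R).coeff (i + 1) - -(X * R).coeff i := by
    rw [sub_mul, one_mul, coeff_sub, coeff_X_mul]
    abel
  rw [sum_congr rfl fun i _ => htelescope i, sum_Icc_sub hkn fun i => -coeff (X * R) i,
    coeff_X_mul, hn]
  simpa using hXR

theorem tailProb_pbPMF_le_of_prod_eq_of_sum_le {n : ℕ} {p q : Fin n → ℝ} {a b : Fin n}
    (hab : a ≠ b) (hp : ∀ i, 0 ≤ p i ∧ p i ≤ 1) (hpq : ∀ i, i ≠ a → i ≠ b → q i = p i)
    (hprod : q a * q b = p a * p b) (hsum : q a + q b ≤ p a + p b) (k : ℕ) :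
    tailProb n (pbPMF n q) k ≤ tailProb n (pbPMF n p) k := by
  set R := pbPoly p ((univ.erase a).erase b)
  have hdiff : tailProb n (pbPMF n p) k - tailProb n (pbPMF n q) k =
      (p a + p b - (q a + q b)) * ∑ i ∈ Icc k n, ((X - 1) * R).coeff i := by
    simp only [tailProb, pbPMF_eq_coeff, ← sum_sub_distrib, ← coeff_sub, mul_sum, coeff_C_mul,
      pbPoly_sub_pbPoly (mem_univ a) (mem_univ b) hab hpq hprod, R]
  have hcard : ((univ.erase a).erase b).card < n := by
    have := card_erase_lt_of_mem (mem_erase.2 ⟨hab.symm, mem_univ b⟩)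
    simpa using this.trans_le card_erase_le
  have hR : 0 ≤ ∑ i ∈ Icc k n, ((X - 1) * R).coeff i :=
    sum_Icc_coeff_X_sub_one_mul_nonneg (coeff_pbPoly_nonneg fun i _ => hp i)
      (coeff_pbPoly_of_card_lt p hcard) k
  have := mul_nonneg (sub_nonneg.2 hsum) hR
  linarith

theorem exp_neg_add_exp_neg_le {s t d : ℝ} (hd : 0 ≤ d) (h : s + d ≤ t - d) :
    exp (-(s + d)) + exp (-(t - d)) ≤ exp (-s) + exp (-t) := by
  have hst : exp (-t) ≤ exp (-(s + d)) := exp_le_exp.2 (by linarith)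
  have hd1 : 1 ≤ exp d := one_le_exp hd
  have hs : exp (-s) = exp (-(s + d)) * exp d := by rw [← exp_add]; ring_nf
  have ht : exp (-(t - d)) = exp (-t) * exp d := by rw [← exp_add]; ring_nf
  -- the difference factors as `(exp (-(s + d)) - exp (-t)) * (exp d - 1)`
  nlinarith [mul_le_mul_of_nonneg_right (sub_nonneg.2 hst) (sub_nonneg.2 hd1)]

theorem tailProb_pbPMF_exp_neg_transfer_le {n : ℕ} {x : Fin n → ℝ} (hx : 0 ≤ x) {a b : Fin n}
    (hab : a ≠ b) {δ : ℝ} (hδ : 0 ≤ δ) (h : x a + δ ≤ x b - δ) (k : ℕ) :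
    tailProb n (pbPMF n fun i => exp (-transfer x a b δ i)) k ≤
      tailProb n (pbPMF n fun i => exp (-x i)) k := by
  refine tailProb_pbPMF_le_of_prod_eq_of_sum_le hab
    (fun i => ⟨(exp_pos _).le, exp_le_one_iff.2 (neg_nonpos.2 (hx i))⟩)
    (fun i hia hib => ?_) ?_ ?_ k
  · rw [transfer_apply_of_ne hia hib]
  · rw [transfer_apply_left hab, transfer_apply_right hab, ← exp_add, ← exp_add]
    ring_nf
  · rw [transfer_apply_left hab, transfer_apply_right hab]
    exact exp_neg_add_exp_neg_le hδ h

section Majorization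

variable {n : ℕ}

def partialSum (x : Fin n → ℝ) (k : ℕ) : ℝ :=
  ∑ i ∈ univ.filter (fun i : Fin n => (i : ℕ) < k), x i

theorem partialSum_of_le (x : Fin n → ℝ) {k : ℕ} (hk : n ≤ k) : partialSum x k = ∑ i, x i := by
  rw [partialSum, filter_true_of_mem fun i _ => i.isLt.trans_le hk]

theorem partialSum_succ (x : Fin n → ℝ) (i : Fin n) :
    partialSum x (i + 1) = partialSum x i + x i := by
  have : univ.filter (fun j : Fin n => (j : ℕ) < i + 1) =
      insert i (univ.filter fun j : Fin n => (j : ℕ) < i) := by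
    ext j
    simp only [mem_filter, mem_univ, true_and, mem_insert, Fin.ext_iff]
    omega
  rw [partialSum, partialSum, this, sum_insert (by simp), add_comm]

theorem forall_partialSum_le {x y : Fin n → ℝ}
    (hpart : ∀ k ≤ n - 1, partialSum x k ≤ partialSum y k) (htot : ∑ i, x i = ∑ i, y i) (k : ℕ) :
    partialSum x k ≤ partialSum y k := by
  rcases le_or_gt k (n - 1) with hk | hk
  · exact hpart k hk
  · rw [partialSum_of_le x (by omega), partialSum_of_le y (by omega), htot]

/-- `b` is the first index where `x` exceeds `y`; the partial sums up to `b` force an earlier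
index `a` where `x` falls short of `y`. -/
theorem exists_transfer_indices {x y : Fin n → ℝ} (hpart : ∀ k, partialSum x k ≤ partialSum y k)
    (htot : ∑ i, x i = ∑ i, y i) (hxy : x ≠ y) :
    ∃ a b, a < b ∧ x a < y a ∧ y b < x b ∧ ∀ i < b, x i ≤ y i := by
  have hexceed : ∃ b, y b < x b := by
    by_contra! h
    exact hxy (funext fun i => (sum_eq_sum_iff_of_le fun i _ => h i).1 htot i (mem_univ i))
  obtain ⟨b, hb, hmin⟩ := wellFounded_lt.has_min {b | y b < x b} hexceed
  have hle : ∀ i < b, x i ≤ y i := fun i hi => not_lt.1 fun h => hmin i h hi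
  have hshort : partialSum x b < partialSum y b := by
    have := hpart (b + 1)
    rw [partialSum_succ, partialSum_succ] at this
    linarith [show y b < x b from hb]
  obtain ⟨a, ha, hxa⟩ := exists_lt_of_sum_lt hshort
  exact ⟨a, b, Fin.lt_def.2 (mem_filter.1 ha).2, hxa, hb, hle⟩

theorem partialSum_transfer_le {x y : Fin n → ℝ} {a b : Fin n} {δ : ℝ} (hab : a < b)
    (hle : ∀ i < b, x i ≤ y i) (ha : x a + δ ≤ y a) (hpart : ∀ k, partialSum x k ≤ partialSum y k)
    (k : ℕ) : partialSum (transfer x a b δ) k ≤ partialSum y k := by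
  by_cases hbk : (b : ℕ) < k
  · have hak : (a : ℕ) < k := lt_trans hab hbk
    rw [partialSum, sum_transfer, if_pos (by simpa using hak), if_pos (by simpa using hbk),
      add_sub_cancel_right]
    exact hpart k
  refine sum_le_sum fun i hi => ?_
  have hib : i < b := Fin.lt_def.2 (by simp only [mem_filter, mem_univ, true_and] at hi; omega)
  by_cases hia : i = a
  · rwa [hia, transfer_apply_left hab.ne]
  · rw [transfer_apply_of_ne hia hib.ne]
    exact hle i hib

theorem apply_le_apply_of_partialSum_le {F : (Fin n → ℝ) → ℝ}
    (hF : ∀ x, 0 ≤ x → ∀ a b, a ≠ b → ∀ δ, 0 ≤ δ → x a + δ ≤ x b - δ →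
      F (transfer x a b δ) ≤ F x)
    {x y : Fin n → ℝ} (hy : Monotone y) (hx : 0 ≤ x)
    (hpart : ∀ k, partialSum x k ≤ partialSum y k) (htot : ∑ i, x i = ∑ i, y i) : F y ≤ F x := by
  induction hd : (univ.filter fun i => x i ≠ y i).card using Nat.strong_induction_on
    generalizing x with
  | _ d ih =>
  obtain rfl | hxy := eq_or_ne x y
  · rfl
  obtain ⟨a, b, hab, hxa, hyb, hle⟩ := exists_transfer_indices hpart htot hxy
  set δ := min (y a - x a) (x b - y b)
  have hδ : 0 ≤ δ := le_min (by linarith) (by linarith)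
  have hδa : x a + δ ≤ y a := by linarith [min_le_left (y a - x a) (x b - y b)]
  have hδb : y b ≤ x b - δ := by linarith [min_le_right (y a - x a) (x b - y b)]
  have hclose : x a + δ ≤ x b - δ := by linarith [hy hab.le]
  have hδeq : x a + δ = y a ∨ x b - δ = y b := by
    rcases min_choice (y a - x a) (x b - y b) with h | h <;> [left; right] <;> linarith
  refine (ih _ (hd ▸ card_transfer_ne_lt hab.ne hxa.ne hyb.ne' hδeq)
    (transfer_nonneg hx hab.ne hδ hclose) (partialSum_transfer_le hab hle hδa hpart)
    (sum_transfer_univ.trans htot) rfl).trans (hF x hx a b hab.ne δ hδ hclose)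

end Majorization

/-- Log-majorization and stochastic ordering (Proschan–Proschan): if
`X ~ PB(p_1, ..., p_n)`, `X' ~ PB(p'_1, ..., p'_n)` with all `p_i, p'_i ∈ (0, 1]`, and
`(-log p_1, ..., -log p_n)` majorizes `(-log p'_1, ..., -log p'_n)`, then `X` is
stochastically larger than `X'`: `P(X ≥ k) ≥ P(X' ≥ k)` for every `k`. -/
theorem proschan_proschan (n : ℕ) (p p' : Fin n → ℝ)
    (hp : ∀ i, 0 < p i ∧ p i ≤ 1) (hp' : ∀ i, 0 < p' i ∧ p' i ≤ 1)
    (hmaj : Majorizes n (fun i => -Real.log (p i)) (fun i => -Real.log (p' i))) :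
    ∀ k : ℕ, tailProb n (pbPMF n p') k ≤ tailProb n (pbPMF n p) k := by
  intro k
  obtain ⟨σ, τ, -, hτ, hpart, htot⟩ := hmaj
  have hx : (0 : Fin n → ℝ) ≤ fun i => -log (p (σ i)) := fun i =>
    neg_nonneg.2 (log_nonpos (hp _).1.le (hp _).2)
  have htot' : ∑ i, -log (p (σ i)) = ∑ i, -log (p' (τ i)) := by
    rw [Equiv.sum_comp σ fun i => -log (p i), Equiv.sum_comp τ fun i => -log (p' i), htot]
  have key := apply_le_apply_of_partialSum_le
    (F := fun x => tailProb n (pbPMF n fun i => exp (-x i)) k)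
    (fun x hx _ _ hab _ hδ h => tailProb_pbPMF_exp_neg_transfer_le hx hab hδ h k) hτ hx
    (forall_partialSum_le hpart htot') htot'
  simp only [neg_neg, exp_log (hp _).1, exp_log (hp' _).1] at key
  rwa [← Function.comp_def p', ← Function.comp_def p, funext (pbPMF_comp_perm n p' τ),
    funext (pbPMF_comp_perm n p σ)] at key
end

section
/- Translated Poisson approximation (Röllin): Let X ~ PB(p_1,...,p_n), μ = Σ_{i=1}^n p_i, σ² = Σ_{i=1}^n p_i(1−p_i) > 0. Then d_TV(L(X), TP(μ, σ²)) ≤ (2 + sqrt(Σ_{i=1}^n p_i³(1−p_i))) / σ², where d_TV is the total variation distance. -/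
/-!
Stein's method. Let `X = |S|` count the successes, `U = ∑_{i ∈ S} p_i`, `m = ⌊μ - σ²⌋` and
`r = μ - m ∈ [σ², σ² + 1)`. For `h : ℕ → [0, 1]` the Stein equation
`r g(k + 1) - k g(k) = h(k) - Po_r(h)` has a solution with increments bounded by `1 / r`.
Evaluated at `W = X - m`, it turns the error `E h(W) - Po_r(h)` into
`E[(U - m)(g(W + 1) - g(W))]` (size biasing one trial at a time), plus a term carried by
`{X < m}`, which Chebyshev bounds by `1 / σ²`. As `E U = μ - σ² = m + (r - σ²)` and
`Var U = ∑ p_i³ (1 - p_i)`, Cauchy–Schwarz bounds the main term by `(1 + √Var U) / σ²`.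
-/

open scoped BigOperators

/-- The Poisson binomial pmf viewed as a pmf on ℤ. -/
noncomputable def pbPMFZ (n : ℕ) (p : Fin n → ℝ) (k : ℤ) : ℝ :=
  if 0 ≤ k then pbPMF n p k.toNat else 0

/-- The translated Poisson pmf `TP(μ, σ²)` on ℤ: `X - ⌊μ - σ²⌋ ~ Poi(σ² + {μ - σ²})`,
where `{x}` is the fractional part of `x`. -/
noncomputable def tpPMF (μ σ2 : ℝ) (k : ℤ) : ℝ :=
  if ⌊μ - σ2⌋ ≤ k then
    Real.exp (-(σ2 + Int.fract (μ - σ2))) * (σ2 + Int.fract (μ - σ2)) ^ (k - ⌊μ - σ2⌋).toNat /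
      ((k - ⌊μ - σ2⌋).toNat.factorial : ℝ)
  else 0

/-- The total variation distance between two pmfs on ℤ: `d_TV(μ, ν) = sup_A |μ(A) - ν(A)|`. -/
noncomputable def tvDistZ (f g : ℤ → ℝ) : ℝ :=
  ⨆ A : Set ℤ, |(∑' k : ℤ, A.indicator f k) - ∑' k : ℤ, A.indicator g k|

open Finset Real

theorem abs_tsum_mul_le_of_tsum_eq_zero {ι : Type*} {a h : ι → ℝ} (ha : Summable a)
    (ha0 : ∑' k, a k = 0) {i : ι} (hai : ∀ k ≠ i, a k ≤ 0) (h0 : ∀ k, 0 ≤ h k)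
    (h1 : ∀ k, h k ≤ 1) : |∑' k, h k * a k| ≤ a i := by
  classical
  have hpeak := hasSum_ite_eq i (a i)
  have hha : Summable fun k => h k * a k := ha.abs.of_norm_bounded fun k => by
    rw [norm_mul, Real.norm_eq_abs, Real.norm_eq_abs, abs_of_nonneg (h0 k)]
    exact mul_le_of_le_one_left (abs_nonneg _) (h1 k)
  have hle_peak : ∀ k, a k ≤ if k = i then a i else 0 := fun k => by
    split_ifs with hk
    · rw [hk]
    · exact hai k hk
  have hai0 : 0 ≤ a i := ha0 ▸ hpeak.tsum_eq ▸ ha.tsum_le_tsum hle_peak hpeak.summable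
  rw [abs_le]
  constructor
  · have hlow : ∀ k, a k - (if k = i then a i else 0) ≤ h k * a k := fun k => by
      split_ifs with hk
      · rw [hk, sub_self]; exact mul_nonneg (h0 i) hai0
      · rw [sub_zero]; nlinarith [hai k hk, h1 k]
    have := (ha.sub hpeak.summable).tsum_le_tsum hlow hha
    rwa [ha.tsum_sub hpeak.summable, ha0, hpeak.tsum_eq, zero_sub] at this
  · have hup : ∀ k, h k * a k ≤ if k = i then a i else 0 := fun k => by
      split_ifs with hk
      · rw [hk]; exact mul_le_of_le_one_left hai0 (h1 i)
      · exact mul_nonpos_of_nonneg_of_nonpos (h0 k) (hai k hk)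
    exact hpeak.tsum_eq ▸ hha.tsum_le_tsum hup hpeak.summable

noncomputable def poissonWeight (r : ℝ) (k : ℕ) : ℝ := exp (-r) * r ^ k / k.factorial

section Poisson

variable {r : ℝ}

theorem poissonWeight_pos (hr : 0 < r) (k : ℕ) : 0 < poissonWeight r k := by
  unfold poissonWeight; positivity

theorem poissonWeight_nonneg (hr : 0 ≤ r) (k : ℕ) : 0 ≤ poissonWeight r k := by
  unfold poissonWeight; positivity

theorem hasSum_poissonWeight (r : ℝ) : HasSum (poissonWeight r) 1 := by
  have := (NormedSpace.expSeries_div_hasSum_exp r).mul_left (exp (-r))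
  rw [← Real.exp_eq_exp_ℝ, ← exp_add, neg_add_cancel, exp_zero] at this
  simp only [← mul_div_assoc] at this
  exact this

theorem mul_poissonWeight (r : ℝ) (k : ℕ) :
    r * poissonWeight r k = (k + 1) * poissonWeight r (k + 1) := by
  simp only [poissonWeight, pow_succ, Nat.factorial_succ, Nat.cast_mul, Nat.cast_succ]
  field_simp

theorem sum_range_poissonWeight_le (hr : 0 ≤ r) (j : ℕ) :
    r * ∑ k ∈ range (j + 1), poissonWeight r k
      ≤ (j + 1) * ∑ k ∈ range (j + 2), poissonWeight r k := by
  rw [mul_sum, mul_sum, sum_range_succ' _ (j + 1)]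
  refine le_add_of_le_of_nonneg (sum_le_sum fun k hk => ?_)
    (mul_nonneg (by positivity) (poissonWeight_nonneg hr _))
  rw [mul_poissonWeight]
  have : (k : ℝ) + 1 ≤ j + 1 := by
    have := mem_range.mp hk
    exact_mod_cast this
  exact mul_le_mul_of_nonneg_right this (poissonWeight_nonneg hr _)

/-- Equivalently `(j + 1) P(Z > j + 1) ≤ r P(Z > j)` for `Z ~ Poi(r)`. -/
theorem sub_le_sum_range_poissonWeight (hr : 0 ≤ r) (j : ℕ) :
    (j + 1 : ℝ) - r ≤ (j + 1) * ∑ k ∈ range (j + 2), poissonWeight r k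
      - r * ∑ k ∈ range (j + 1), poissonWeight r k := by
  have hs := (hasSum_poissonWeight r).summable
  have tail : ∀ t, 1 - ∑ k ∈ range t, poissonWeight r k = ∑' k, poissonWeight r (k + t) := fun t => by
    rw [← (hasSum_poissonWeight r).tsum_eq, ← hs.sum_add_tsum_nat_add t, add_sub_cancel_left]
  have key : (j + 1) * (1 - ∑ k ∈ range (j + 2), poissonWeight r k)
      ≤ r * (1 - ∑ k ∈ range (j + 1), poissonWeight r k) := by
    rw [tail, tail, ← tsum_mul_left, ← tsum_mul_left]
    refine Summable.tsum_le_tsum (fun k => ?_) (((summable_nat_add_iff _).2 hs).mul_left _)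
      (((summable_nat_add_iff _).2 hs).mul_left _)
    rw [mul_poissonWeight, show k + (j + 1) + 1 = k + (j + 2) by ring]
    refine mul_le_mul_of_nonneg_right ?_ (poissonWeight_nonneg hr _)
    push_cast; linarith [(k.cast_nonneg : (0 : ℝ) ≤ k)]
  linarith

noncomputable def poissonExpect (r : ℝ) (h : ℕ → ℝ) : ℝ := ∑' k, h k * poissonWeight r k

variable {h : ℕ → ℝ}

theorem summable_mul_poissonWeight (hr : 0 ≤ r) (h0 : ∀ k, 0 ≤ h k) (h1 : ∀ k, h k ≤ 1) :
    Summable fun k => h k * poissonWeight r k :=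
  (hasSum_poissonWeight r).summable.of_nonneg_of_le
    (fun k => mul_nonneg (h0 k) (poissonWeight_nonneg hr k))
    (fun k => mul_le_of_le_one_left (poissonWeight_nonneg hr k) (h1 k))

theorem poissonExpect_nonneg (hr : 0 ≤ r) (h0 : ∀ k, 0 ≤ h k) : 0 ≤ poissonExpect r h :=
  tsum_nonneg fun k => mul_nonneg (h0 k) (poissonWeight_nonneg hr k)

theorem poissonExpect_le_one (hr : 0 ≤ r) (h0 : ∀ k, 0 ≤ h k) (h1 : ∀ k, h k ≤ 1) :
    poissonExpect r h ≤ 1 :=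
  (hasSum_poissonWeight r).tsum_eq ▸ (summable_mul_poissonWeight hr h0 h1).tsum_le_tsum
    (fun k => mul_le_of_le_one_left (poissonWeight_nonneg hr k) (h1 k))
    (hasSum_poissonWeight r).summable

noncomputable def steinPartialSum (r : ℝ) (h : ℕ → ℝ) (j : ℕ) : ℝ :=
  ∑ k ∈ range (j + 1), (h k - poissonExpect r h) * poissonWeight r k

noncomputable def steinSolution (r : ℝ) (h : ℕ → ℝ) (z : ℤ) : ℝ :=
  if 0 < z then steinPartialSum r h (z.toNat - 1) / (r * poissonWeight r (z.toNat - 1)) else 0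

theorem steinSolution_of_nonpos {z : ℤ} (hz : z ≤ 0) : steinSolution r h z = 0 :=
  if_neg hz.not_gt

theorem steinSolution_natCast_add_one (k : ℕ) :
    steinSolution r h (k + 1) = steinPartialSum r h k / (r * poissonWeight r k) := by
  rw [steinSolution, if_pos (by omega)]
  congr

theorem steinSolution_stein_eq (hr : 0 < r) (k : ℕ) :
    r * steinSolution r h (k + 1) - k * steinSolution r h k = h k - poissonExpect r h := by
  have hπ := (poissonWeight_pos hr k).ne'
  cases k with
  | zero =>
    rw [steinSolution_natCast_add_one, steinPartialSum, Nat.cast_zero, zero_mul, sub_zero,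
      zero_add, sum_range_one]
    field_simp
  | succ k =>
    have hπ' := (poissonWeight_pos hr k).ne'
    have hrec := mul_poissonWeight r k
    rw [steinSolution_natCast_add_one, Nat.cast_succ (R := ℤ), steinSolution_natCast_add_one,
      steinPartialSum, sum_range_succ, ← steinPartialSum]
    field_simp
    push_cast
    linear_combination steinPartialSum r h k * hrec

theorem hasSum_mul_ite_le (r : ℝ) (j : ℕ) (u : ℕ → ℝ) :
    HasSum (fun k => u k * if k ≤ j then j + 1 - r else if k = j + 1 then (j + 1 : ℝ) else 0)
      ((j + 1) * ∑ k ∈ range (j + 2), u k - r * ∑ k ∈ range (j + 1), u k) := by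
  have hsum : ∑ k ∈ range (j + 2),
      u k * (if k ≤ j then j + 1 - r else if k = j + 1 then (j + 1 : ℝ) else 0)
        = (j + 1) * ∑ k ∈ range (j + 2), u k - r * ∑ k ∈ range (j + 1), u k := by
    rw [sum_range_succ, sum_range_succ _ (j + 1), if_neg (by omega), if_pos rfl,
      sum_congr rfl fun k hk => by rw [if_pos (by simp at hk; omega)], ← sum_mul]
    ring
  rw [← hsum]
  refine hasSum_sum_of_ne_finset_zero fun k hk => ?_
  simp only [mem_range, not_lt] at hk
  rw [if_neg (by omega), if_neg (by omega), mul_zero]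

/-- `(j + 1) F(j + 1) - r F(j) = ∑ h_k a_k` for weights `a` that are nonpositive except at
`k = j + 1` and have total mass `0` (the case `h ≡ 1`, where `F ≡ 0`). -/
theorem abs_succ_mul_steinPartialSum_sub_le (hr : 0 ≤ r) (h0 : ∀ k, 0 ≤ h k) (h1 : ∀ k, h k ≤ 1)
    (j : ℕ) : |(j + 1) * steinPartialSum r h (j + 1) - r * steinPartialSum r h j|
      ≤ (j + 1) * poissonWeight r (j + 1) := by
  set J : ℝ := j + 1
  set d : ℕ → ℝ := fun k => if k ≤ j then J - r else if k = j + 1 then J else 0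
  set D := J * ∑ k ∈ range (j + 2), poissonWeight r k - r * ∑ k ∈ range (j + 1), poissonWeight r k
  set a : ℕ → ℝ := fun k => poissonWeight r k * (d k - D)
  have hasSum_mul_a : ∀ f : ℕ → ℝ, Summable (fun k => f k * poissonWeight r k) →
      HasSum (fun k => f k * a k) (J * ∑ k ∈ range (j + 2), f k * poissonWeight r k
        - r * ∑ k ∈ range (j + 1), f k * poissonWeight r k - D * ∑' k, f k * poissonWeight r k) := by
    intro f hf
    have ha : (fun k => f k * a k)
        = fun k => f k * poissonWeight r k * d k - D * (f k * poissonWeight r k) := by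
      funext k; simp only [a]; ring
    rw [ha]
    exact (hasSum_mul_ite_le r j _).sub (hf.hasSum.mul_left D)
  have hD0 : 0 ≤ D := sub_nonneg.2 (sum_range_poissonWeight_le hr j)
  have hDge : J - r ≤ D := sub_le_sum_range_poissonWeight hr j
  have hsum_a : HasSum a 0 := by
    have := hasSum_mul_a (fun _ => 1) (by simpa only [one_mul] using (hasSum_poissonWeight r).summable)
    simp only [one_mul, (hasSum_poissonWeight r).tsum_eq, mul_one] at this
    rwa [show J * ∑ k ∈ range (j + 2), poissonWeight r k
      - r * ∑ k ∈ range (j + 1), poissonWeight r k - D = 0 from sub_self D] at this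
  have ha_nonpos : ∀ k ≠ j + 1, a k ≤ 0 := fun k hk =>
    mul_nonpos_of_nonneg_of_nonpos (poissonWeight_nonneg hr k) <| sub_nonpos.2 <| by
      simp only [d]
      split_ifs <;> linarith
  have hF : J * steinPartialSum r h (j + 1) - r * steinPartialSum r h j
      = J * ∑ k ∈ range (j + 2), h k * poissonWeight r k
        - r * ∑ k ∈ range (j + 1), h k * poissonWeight r k
        - D * ∑' k, h k * poissonWeight r k := by
    simp only [steinPartialSum, sub_mul, sum_sub_distrib, ← mul_sum, D, poissonExpect]
    ring
  have key := abs_tsum_mul_le_of_tsum_eq_zero hsum_a.summable hsum_a.tsum_eq ha_nonpos h0 h1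
  rw [(hasSum_mul_a h (summable_mul_poissonWeight hr h0 h1)).tsum_eq, ← hF] at key
  refine key.trans ?_
  simp only [a, d, if_neg (show ¬j + 1 ≤ j by omega), if_true]
  nlinarith [poissonWeight_nonneg hr (j + 1)]

theorem abs_steinSolution_add_one_sub_le (hr : 0 < r) (h0 : ∀ k, 0 ≤ h k) (h1 : ∀ k, h k ≤ 1)
    (z : ℤ) : |steinSolution r h (z + 1) - steinSolution r h z| ≤ 1 / r := by
  rcases lt_trichotomy z 0 with hz | rfl | hz
  · rw [steinSolution_of_nonpos (by omega), steinSolution_of_nonpos hz.le, sub_zero, abs_zero]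
    positivity
  · have hg1 := steinSolution_stein_eq (h := h) hr 0
    simp only [Nat.cast_zero, zero_mul, sub_zero, zero_add] at hg1
    have hg1' : steinSolution r h 1 = (h 0 - poissonExpect r h) / r := by
      rw [← hg1]; field_simp
    rw [zero_add, hg1', steinSolution_of_nonpos le_rfl, sub_zero, abs_div, abs_of_pos hr]
    refine div_le_div_of_nonneg_right (abs_le.2 ⟨?_, ?_⟩) hr.le
    · linarith [h0 0, poissonExpect_le_one hr.le h0 h1]
    · linarith [h1 0, poissonExpect_nonneg hr.le h0]
  · obtain ⟨j, rfl⟩ : ∃ j : ℕ, z = j + 1 := ⟨(z - 1).toNat, by omega⟩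
    have hπ := poissonWeight_pos hr j
    have hπ' := poissonWeight_pos hr (j + 1)
    have hrec := mul_poissonWeight r j
    have hdiff : steinSolution r h (j + 1 + 1) - steinSolution r h (j + 1)
        = ((j + 1) * steinPartialSum r h (j + 1) - r * steinPartialSum r h j)
          / ((j + 1) * r * poissonWeight r (j + 1)) := by
      rw [show (j : ℤ) + 1 + 1 = ((j + 1 : ℕ) : ℤ) + 1 by push_cast; ring,
        steinSolution_natCast_add_one, steinSolution_natCast_add_one]
      rw [eq_div_iff (by positivity)]
      field_simp
      linear_combination steinPartialSum r h j * hrec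
    have hden : 0 < (j + 1) * r * poissonWeight r (j + 1) := by positivity
    rw [hdiff, abs_div, abs_of_pos hden, div_le_div_iff₀ hden hr]
    calc _ ≤ (j + 1) * poissonWeight r (j + 1) * r :=
          mul_le_mul_of_nonneg_right (abs_succ_mul_steinPartialSum_sub_le hr.le h0 h1 j) hr.le
      _ = 1 * ((j + 1) * r * poissonWeight r (j + 1)) := by ring

theorem sub_poissonExpect_eq_stein_add (hr : 0 < r) (H : ℤ → ℝ) (m x : ℤ) :
    H x - poissonExpect r (fun k => H (k + m))
      = r * steinSolution r (fun k => H (k + m)) (x - m + 1)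
          - ((x : ℝ) - m) * steinSolution r (fun k => H (k + m)) (x - m)
        + if x < m then H x - poissonExpect r (fun k => H (k + m)) else 0 := by
  split_ifs with hx
  · rw [steinSolution_of_nonpos (by omega), steinSolution_of_nonpos (by omega)]
    ring
  · obtain ⟨k, hk⟩ : ∃ k : ℕ, x - m = k := ⟨(x - m).toNat, by omega⟩
    have hcast : (x : ℝ) - m = k := by exact_mod_cast hk
    rw [hk, hcast, steinSolution_stein_eq hr k, add_zero, show (k : ℤ) + m = x by omega]

end Poisson

section Bernoulli

variable {ι : Type*} [Fintype ι] [DecidableEq ι] (p : ι → ℝ)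

noncomputable def bernoulliWeight (S : Finset ι) : ℝ := ∏ i, if i ∈ S then p i else 1 - p i

noncomputable def bernoulliExpect (F : Finset ι → ℝ) : ℝ := ∑ S, bernoulliWeight p S * F S

theorem bernoulliWeight_eq_prod_mul_prod (S : Finset ι) :
    bernoulliWeight p S = (∏ i ∈ S, p i) * ∏ i ∈ Sᶜ, (1 - p i) := by
  rw [bernoulliWeight, prod_ite, filter_mem_eq_inter, univ_inter, filter_not, filter_mem_eq_inter,
    univ_inter, compl_eq_univ_sdiff]

theorem sum_bernoulliWeight : ∑ S, bernoulliWeight p S = 1 := by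
  simp only [bernoulliWeight_eq_prod_mul_prod, ← Fintype.prod_add, add_sub_cancel, prod_const_one]

variable {p}

theorem bernoulliWeight_nonneg (hp : ∀ i, 0 ≤ p i ∧ p i ≤ 1) (S : Finset ι) :
    0 ≤ bernoulliWeight p S :=
  prod_nonneg fun i _ => by split_ifs <;> linarith [hp i]

variable (p)

theorem bernoulliExpect_const (c : ℝ) : bernoulliExpect p (fun _ => c) = c := by
  rw [bernoulliExpect, ← sum_mul, sum_bernoulliWeight, one_mul]

theorem bernoulliExpect_add (F G : Finset ι → ℝ) :
    bernoulliExpect p (fun S => F S + G S) = bernoulliExpect p F + bernoulliExpect p G := by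
  simp only [bernoulliExpect, mul_add, sum_add_distrib]

theorem bernoulliExpect_sub (F G : Finset ι → ℝ) :
    bernoulliExpect p (fun S => F S - G S) = bernoulliExpect p F - bernoulliExpect p G := by
  simp only [bernoulliExpect, mul_sub, sum_sub_distrib]

theorem bernoulliExpect_mul_const (F : Finset ι → ℝ) (c : ℝ) :
    bernoulliExpect p (fun S => F S * c) = bernoulliExpect p F * c := by
  simp only [bernoulliExpect, sum_mul, mul_assoc]

theorem bernoulliExpect_sum {κ : Type*} (s : Finset κ) (F : κ → Finset ι → ℝ) :
    bernoulliExpect p (fun S => ∑ i ∈ s, F i S) = ∑ i ∈ s, bernoulliExpect p (F i) := by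
  simp only [bernoulliExpect, mul_sum]
  exact sum_comm

variable {p}

theorem abs_bernoulliExpect_le (hp : ∀ i, 0 ≤ p i ∧ p i ≤ 1) {F G : Finset ι → ℝ}
    (hFG : ∀ S, |F S| ≤ G S) : |bernoulliExpect p F| ≤ bernoulliExpect p G :=
  (abs_sum_le_sum_abs _ _).trans <| sum_le_sum fun S _ => by
    rw [abs_mul, abs_of_nonneg (bernoulliWeight_nonneg hp S)]
    exact mul_le_mul_of_nonneg_left (hFG S) (bernoulliWeight_nonneg hp S)

theorem bernoulliExpect_abs_le_sqrt (hp : ∀ i, 0 ≤ p i ∧ p i ≤ 1) (F : Finset ι → ℝ) :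
    bernoulliExpect p (fun S => |F S|) ≤ √(bernoulliExpect p fun S => F S ^ 2) := by
  have hw := bernoulliWeight_nonneg hp
  refine le_sqrt_of_sq_le ?_
  have := sum_sq_le_sum_mul_sum_of_sq_le_mul univ (r := fun S => bernoulliWeight p S * |F S|)
    (fun S _ => hw S) (fun S _ => mul_nonneg (hw S) (sq_nonneg (F S))) (fun S _ => by
      rw [mul_pow, sq_abs]; nlinarith [hw S])
  rwa [sum_bernoulliWeight, one_mul] at this

theorem bernoulliExpect_eq_of_forall_notMem (i : ι) {F : Finset ι → ℝ} {c : ℝ}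
    (hF : ∀ S, i ∉ S → (1 - p i) * F S + p i * F (insert i S) = c) :
    bernoulliExpect p F = c := by
  have split : ∀ G : Finset ι → ℝ,
      ∑ S, G S = ∑ S ∈ (univ.erase i).powerset, (G S + G (insert i S)) := fun G => by
    rw [← powerset_univ, sum_add_distrib]
    conv_lhs => rw [← insert_erase (mem_univ i)]
    exact sum_powerset_insert (notMem_erase i univ) G
  set w : Finset ι → ℝ := fun S => ∏ j ∈ univ.erase i, if j ∈ S then p j else 1 - p j
  have hw : ∀ S ∈ (univ.erase i).powerset,
      bernoulliWeight p S = (1 - p i) * w S ∧ bernoulliWeight p (insert i S) = p i * w S := by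
    intro S hS
    have hi : i ∉ S := fun h => notMem_erase i univ (mem_powerset.1 hS h)
    simp only [bernoulliWeight, ← mul_prod_erase univ _ (mem_univ i), if_neg hi,
      if_pos (mem_insert_self i S), w]
    refine ⟨trivial, congrArg (p i * ·) (prod_congr rfl fun j hj => ?_)⟩
    simp only [mem_insert, ne_of_mem_erase hj, false_or]
  have hw1 : ∑ S ∈ (univ.erase i).powerset, w S = 1 := by
    rw [← sum_bernoulliWeight p, split]
    refine sum_congr rfl fun S hS => ?_
    rw [(hw S hS).1, (hw S hS).2]; ring
  rw [bernoulliExpect, split, ← mul_one c, ← hw1, mul_sum]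
  refine sum_congr rfl fun S hS => ?_
  rw [(hw S hS).1, (hw S hS).2, ← hF S fun h => notMem_erase i univ (mem_powerset.1 hS h)]
  ring

variable (p)

theorem bernoulliExpect_sq_sum_sub (a : ι → ℝ) :
    bernoulliExpect p (fun S => (∑ i ∈ S, a i - ∑ i, a i * p i) ^ 2)
      = ∑ i, a i ^ 2 * (p i * (1 - p i)) := by
  have hsq : ∀ S : Finset ι, (∑ i ∈ S, a i - ∑ i, a i * p i) ^ 2
      = ∑ i, a i * ((if i ∈ S then 1 else 0) - p i) * (∑ i ∈ S, a i - ∑ i, a i * p i) := by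
    intro S
    rw [← sum_mul, sq]
    simp only [mul_sub, mul_ite, mul_one, mul_zero, sum_sub_distrib, sum_ite_mem, univ_inter]
  rw [funext hsq, bernoulliExpect_sum]
  refine sum_congr rfl fun i _ => bernoulliExpect_eq_of_forall_notMem i fun S hi => ?_
  rw [if_neg hi, if_pos (mem_insert_self i S), sum_insert hi]
  ring

theorem bernoulliExpect_stein_identity (g : ℤ → ℝ) (m : ℤ) :
    bernoulliExpect p (fun S => (∑ i, p i - m) * g (S.card - m + 1)
        - ((S.card : ℝ) - m) * g (S.card - m))
      = bernoulliExpect p (fun S => (∑ i ∈ S, p i - m) * (g (S.card - m + 1) - g (S.card - m))) := by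
  rw [← sub_eq_zero, ← bernoulliExpect_sub]
  have hpt : ∀ S : Finset ι,
      (∑ i, p i - m) * g (S.card - m + 1) - ((S.card : ℝ) - m) * g (S.card - m)
        - (∑ i ∈ S, p i - m) * (g (S.card - m + 1) - g (S.card - m))
      = ∑ i, (p i * g (S.card - m + 1) - (if i ∈ S then 1 else 0) * g (S.card - m)
          - p i * (if i ∈ S then 1 else 0) * (g (S.card - m + 1) - g (S.card - m))) := by
    intro S
    simp only [sum_sub_distrib, ← sum_mul, mul_ite, mul_one, mul_zero, sum_ite_mem, univ_inter,
      sum_const, nsmul_eq_mul]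
    ring
  rw [funext hpt, bernoulliExpect_sum]
  refine sum_eq_zero fun i _ => bernoulliExpect_eq_of_forall_notMem i fun S hi => ?_
  rw [if_neg hi, if_pos (mem_insert_self i S), card_insert_of_notMem hi,
    show ((S.card + 1 : ℕ) : ℤ) - m = S.card - m + 1 by push_cast; ring]
  ring

end Bernoulli

section Estimate

variable {ι : Type*} [Fintype ι] [DecidableEq ι] {p : ι → ℝ}

theorem abs_bernoulliExpect_ite_card_lt_le (hp : ∀ i, 0 ≤ p i ∧ p i ≤ 1) {σ2 : ℝ}
    (hσ2 : σ2 = ∑ i, p i * (1 - p i)) (hσ2pos : 0 < σ2) {m : ℤ} (hm : (m : ℝ) ≤ ∑ i, p i - σ2)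
    {F : Finset ι → ℝ} (hF : ∀ S, |F S| ≤ 1) :
    |bernoulliExpect p (fun S => if (S.card : ℤ) < m then F S else 0)| ≤ 1 / σ2 := by
  have hvar : bernoulliExpect p (fun S => ((S.card : ℝ) - ∑ i, p i) ^ 2) = σ2 := by
    simpa [hσ2] using bernoulliExpect_sq_sum_sub p (fun _ => 1)
  calc _ ≤ bernoulliExpect p (fun S => ((S.card : ℝ) - ∑ i, p i) ^ 2 * (1 / σ2 ^ 2)) :=
        abs_bernoulliExpect_le hp fun S => ?_
    _ = 1 / σ2 := by rw [bernoulliExpect_mul_const, hvar]; field_simp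
  split_ifs with hS
  · have hgap : σ2 ≤ ∑ i, p i - S.card := by
      have : (S.card : ℝ) ≤ m - 1 := by exact_mod_cast (show (S.card : ℤ) ≤ m - 1 by omega)
      linarith
    rw [mul_one_div, le_div_iff₀ (by positivity)]
    nlinarith [hF S, abs_nonneg (F S)]
  · rw [abs_zero]; positivity

theorem abs_bernoulliExpect_sum_sub_mul_le (hp : ∀ i, 0 ≤ p i ∧ p i ≤ 1) {σ2 : ℝ}
    (hσ2 : σ2 = ∑ i, p i * (1 - p i)) (hσ2pos : 0 < σ2) {m : ℤ} (hm_le : σ2 ≤ ∑ i, p i - m)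
    (hm_ge : ∑ i, p i - m ≤ σ2 + 1) {D : Finset ι → ℝ} (hD : ∀ S, |D S| ≤ 1 / (∑ i, p i - m)) :
    |bernoulliExpect p (fun S => (∑ i ∈ S, p i - m) * D S)|
      ≤ (1 + √(∑ i, p i ^ 3 * (1 - p i))) / σ2 := by
  set r := ∑ i, p i - m
  have hr : 0 < r := by linarith
  have hmean : ∑ i, p i * p i - m = r - σ2 := by
    simp only [r, hσ2, mul_sub, mul_one, sum_sub_distrib]
    ring
  have hvar : bernoulliExpect p (fun S => (∑ i ∈ S, p i - ∑ i, p i * p i) ^ 2)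
      = ∑ i, p i ^ 3 * (1 - p i) := by
    rw [bernoulliExpect_sq_sum_sub]; exact sum_congr rfl fun i _ => by ring
  calc _ ≤ bernoulliExpect p (fun S => (|∑ i ∈ S, p i - ∑ i, p i * p i| + (r - σ2)) * (1 / r)) :=
        abs_bernoulliExpect_le hp fun S => ?_
    _ = (bernoulliExpect p (fun S => |∑ i ∈ S, p i - ∑ i, p i * p i|) + (r - σ2)) * (1 / r) := by
        rw [bernoulliExpect_mul_const, bernoulliExpect_add, bernoulliExpect_const]
    _ ≤ (√(∑ i, p i ^ 3 * (1 - p i)) + 1) * (1 / σ2) :=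
        mul_le_mul (add_le_add (hvar ▸ bernoulliExpect_abs_le_sqrt hp _) (by linarith))
          (one_div_le_one_div_of_le hσ2pos hm_le) (by positivity) (by positivity)
    _ = _ := by ring
  rw [abs_mul]
  refine mul_le_mul ?_ (hD S) (abs_nonneg _) (by positivity)
  calc |∑ i ∈ S, p i - m| = |(∑ i ∈ S, p i - ∑ i, p i * p i) + (r - σ2)| := by
        rw [← hmean]; ring_nf
    _ ≤ _ := (abs_add_le _ _).trans (by rw [abs_of_nonneg (by linarith : 0 ≤ r - σ2)])

theorem abs_bernoulliExpect_sub_poissonExpect_le (hp : ∀ i, 0 ≤ p i ∧ p i ≤ 1) {σ2 : ℝ}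
    (hσ2 : σ2 = ∑ i, p i * (1 - p i)) (hσ2pos : 0 < σ2) {m : ℤ} (hm_le : σ2 ≤ ∑ i, p i - m)
    (hm_ge : ∑ i, p i - m ≤ σ2 + 1) {H : ℤ → ℝ} (H0 : ∀ x, 0 ≤ H x) (H1 : ∀ x, H x ≤ 1) :
    |bernoulliExpect p (fun S => H S.card) - poissonExpect (∑ i, p i - m) (fun k => H (k + m))|
      ≤ (2 + √(∑ i, p i ^ 3 * (1 - p i))) / σ2 := by
  set r := ∑ i, p i - m
  set h : ℕ → ℝ := fun k => H (k + m)
  have hr : 0 < r := by linarith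
  have hEh0 := poissonExpect_nonneg hr.le (h := h) fun k => H0 _
  have hEh1 := poissonExpect_le_one hr.le (h := h) (fun k => H0 _) fun k => H1 _
  have hdecomp : bernoulliExpect p (fun S => H S.card) - poissonExpect r h
      = bernoulliExpect p (fun S => (∑ i ∈ S, p i - m)
          * (steinSolution r h (S.card - m + 1) - steinSolution r h (S.card - m)))
        + bernoulliExpect p (fun S => if (S.card : ℤ) < m then H S.card - poissonExpect r h
          else 0) := by
    calc _ = bernoulliExpect p (fun S => H S.card - poissonExpect r h) := by
          rw [bernoulliExpect_sub, bernoulliExpect_const]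
      _ = bernoulliExpect p (fun S => (r * steinSolution r h (S.card - m + 1)
            - ((S.card : ℝ) - m) * steinSolution r h (S.card - m))
            + if (S.card : ℤ) < m then H S.card - poissonExpect r h else 0) :=
          congrArg _ <| funext fun S => by
            simpa only [Int.cast_natCast] using sub_poissonExpect_eq_stein_add hr H m S.card
      _ = _ := by rw [bernoulliExpect_add, bernoulliExpect_stein_identity]
  rw [hdecomp]
  calc _ ≤ _ := abs_add_le _ _
    _ ≤ (1 + √(∑ i, p i ^ 3 * (1 - p i))) / σ2 + 1 / σ2 := add_le_add
        (abs_bernoulliExpect_sum_sub_mul_le hp hσ2 hσ2pos hm_le hm_ge fun S =>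
          abs_steinSolution_add_one_sub_le hr (fun k => H0 _) (fun k => H1 _) _)
        (abs_bernoulliExpect_ite_card_lt_le hp hσ2 hσ2pos (by linarith) fun S =>
          abs_le.2 ⟨by linarith [H0 S.card], by linarith [H1 S.card]⟩)
    _ = _ := by ring

end Estimate

theorem pbPMFZ_eq_sum {n : ℕ} (p : Fin n → ℝ) (k : ℤ) :
    pbPMFZ n p k = ∑ S, if k = S.card then bernoulliWeight p S else 0 := by
  rw [pbPMFZ]
  split_ifs with hk
  · rw [pbPMF, powersetCard_eq_filter, powerset_univ, sum_filter]
    refine sum_congr rfl fun S _ => ?_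
    rw [bernoulliWeight_eq_prod_mul_prod]
    split_ifs <;> first | rfl | omega
  · exact (sum_eq_zero fun S _ => if_neg (by omega)).symm

theorem tsum_mul_pbPMFZ {n : ℕ} (p : Fin n → ℝ) (H : ℤ → ℝ) :
    ∑' k, H k * pbPMFZ n p k = bernoulliExpect p (fun S => H S.card) := by
  have hterm : ∀ k, H k * pbPMFZ n p k
      = ∑ S, if k = S.card then bernoulliWeight p S * H S.card else 0 := fun k => by
    rw [pbPMFZ_eq_sum, mul_sum]
    refine sum_congr rfl fun S _ => ?_
    split_ifs with hk
    · rw [hk, mul_comm]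
    · rw [mul_zero]
  simp only [hterm]
  rw [Summable.tsum_finsetSum fun S _ => (hasSum_ite_eq _ _).summable]
  exact sum_congr rfl fun S _ => tsum_ite_eq _ _

theorem tsum_mul_tpPMF (μ σ2 : ℝ) (H : ℤ → ℝ) :
    ∑' k, H k * tpPMF μ σ2 k
      = poissonExpect (σ2 + Int.fract (μ - σ2)) (fun k => H (k + ⌊μ - σ2⌋)) := by
  have hinj : Function.Injective fun k : ℕ => (k : ℤ) + ⌊μ - σ2⌋ := fun a b hab => by
    simpa using hab
  have hsupp : Function.support (fun k => H k * tpPMF μ σ2 k)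
      ⊆ Set.range fun k : ℕ => (k : ℤ) + ⌊μ - σ2⌋ := fun k hk => by
    by_cases hfl : ⌊μ - σ2⌋ ≤ k
    · exact ⟨(k - ⌊μ - σ2⌋).toNat, by simp only; omega⟩
    · exact absurd (show H k * tpPMF μ σ2 k = 0 by rw [tpPMF, if_neg hfl, mul_zero]) hk
  rw [poissonExpect, ← hinj.tsum_eq hsupp]
  refine tsum_congr fun k => ?_
  rw [tpPMF, if_pos (by omega), add_sub_cancel_right, Int.toNat_natCast, poissonWeight]

/-- Translated Poisson approximation (Röllin): for `X ~ PB(p_1, ..., p_n)` with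
`μ = Σ p_i` and `σ² = Σ p_i (1 - p_i) > 0`,
`d_TV(L(X), TP(μ, σ²)) ≤ (2 + sqrt(Σ p_i³ (1 - p_i))) / σ²`. -/
theorem rollin_translated_poisson (n : ℕ) (p : Fin n → ℝ)
    (hp : ∀ i, 0 ≤ p i ∧ p i ≤ 1)
    (μ σ2 : ℝ) (hμ : μ = ∑ i, p i) (hσ2 : σ2 = ∑ i, p i * (1 - p i)) (hσ2pos : 0 < σ2) :
    tvDistZ (pbPMFZ n p) (tpPMF μ σ2) ≤
      (2 + Real.sqrt (∑ i, (p i) ^ 3 * (1 - p i))) / σ2 := by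
  subst hμ
  have hrate : σ2 + Int.fract (∑ i, p i - σ2) = ∑ i, p i - ⌊∑ i, p i - σ2⌋ := by
    rw [← Int.self_sub_floor]; ring
  refine ciSup_le fun A => ?_
  have hind : ∀ (f : ℤ → ℝ) k, A.indicator f k = A.indicator 1 k * f k := fun f k => by
    by_cases hk : k ∈ A <;> simp [hk]
  simp only [hind (pbPMFZ n p), hind (tpPMF _ σ2), tsum_mul_pbPMFZ, tsum_mul_tpPMF, hrate]
  refine abs_bernoulliExpect_sub_poissonExpect_le hp hσ2 hσ2pos ?_ ?_
    (fun x => Set.indicator_nonneg (fun _ _ => zero_le_one) x)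
    (fun x => Set.indicator_le_self' (fun _ _ => zero_le_one) x)
  · linarith [Int.floor_le (∑ i, p i - σ2)]
  · linarith [Int.lt_floor_add_one (∑ i, p i - σ2)]
end

section
/- Integer division preserves the strongly Rayleigh property (Ghosh–Liggett–Pemantle): Let X be a strongly Rayleigh random variable, i.e. an integer-valued random variable with values in {0,...,n} whose probability generating function Σ_{i=0}^n P(X=i) z^i has only real roots. Then for every integer k ≥ 1, the random variable ⌊X/k⌋ is strongly Rayleigh: its probability generating function also has only real roots. -/
open scoped BigOperators

def RealRooted (f : Polynomial ℝ) : Prop :=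
  ∀ z : ℂ, (f.map (algebraMap ℝ ℂ)).IsRoot z → z.im = 0

/-!
Write `p(z) = ∑_{s<k} z^s p_s(z^k)`; the generating function of `⌊X/k⌋` is `∑_s p_s`. Fix `w` in
the open upper half-plane. If `p = c ∏ (z + t_i)` with all `t_i ≥ 0`, then, ignoring zero entries,
the arguments of `p_0(w), …, p_{k-1}(w)` decrease with `s` inside a window of width `arg w < π`.
This holds for a constant, and multiplying `p` by `z + t` replaces the vector `(p_s(w))_s` by
`(w p_{k-1}(w), p_0(w), …, p_{k-2}(w)) + t (p_s(w))_s`, which preserves it. Numbers in such a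
window sum to zero only if all vanish, and they do not all vanish: `p(x) = ∑_s x^s p_s(w) ≠ 0` for
a `k`-th root `x` of `w`, which is not real. So `∑_s p_s` has no zero in the upper half-plane, nor,
by conjugation, in the lower one.
-/

open Polynomial Finset ComplexConjugate
open scoped ComplexOrder

theorem Nat.add_one_mod_eq_ite {k : ℕ} (hk : 0 < k) (i : ℕ) :
    (i + 1) % k = if i % k + 1 = k then 0 else i % k + 1 := by
  rcases Nat.lt_or_ge 1 k with h | h
  · rw [Nat.add_mod_eq_ite, Nat.mod_eq_of_lt h]
    have := Nat.mod_lt i hk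
    split_ifs <;> omega
  · obtain rfl : k = 1 := by omega
    simp [Nat.mod_one]

namespace Polynomial

variable {R : Type*} [CommSemiring R]

/-- The value at `w` of the `s`-th `k`-section `p_s` of `p`, where `p(z) = ∑_{s<k} z^s p_s(z^k)`. -/
noncomputable def sectionAt (k s : ℕ) (w : R) : R[X] →ₗ[R] R :=
  lsum fun i => (if i % k = s then w ^ (i / k) else 0) • LinearMap.id

theorem sectionAt_monomial (k s i : ℕ) (w a : R) :
    sectionAt k s w (monomial i a) = if i % k = s then a * w ^ (i / k) else 0 := by
  simp only [sectionAt, ite_smul, zero_smul, lsum_apply, map_zero, sum_monomial_index]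
  split_ifs <;> simp [mul_comm]

theorem sectionAt_C_mul (k s : ℕ) (w a : R) (p : R[X]) :
    sectionAt k s w (C a * p) = a * sectionAt k s w p := by
  rw [← smul_eq_C_mul, map_smul, smul_eq_mul]

theorem sectionAt_C (k s : ℕ) (w a : R) :
    sectionAt k s w (C a) = if s = 0 then a else 0 := by
  simp [← monomial_zero_left, sectionAt_monomial, eq_comm]

theorem sectionAt_zero_X_mul {k : ℕ} (hk : 0 < k) (w : R) (p : R[X]) :
    sectionAt k 0 w (X * p) = w * sectionAt k (k - 1) w p := by
  induction p using Polynomial.induction_on' with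
  | add p q hp hq => simp only [mul_add, map_add, hp, hq]
  | monomial i a =>
    rw [X_mul_monomial, sectionAt_monomial, sectionAt_monomial]
    by_cases hi : i % k + 1 = k
    · have hmod : (i + 1) % k = 0 := by rw [Nat.add_one_mod_eq_ite hk, if_pos hi]
      rw [if_pos hmod, if_pos (by omega), Nat.succ_div_of_mod_eq_zero hmod, pow_succ]
      ring
    · have hmod : (i + 1) % k ≠ 0 := by rw [Nat.add_one_mod_eq_ite hk, if_neg hi]; omega
      rw [if_neg hmod, if_neg (by omega), mul_zero]

theorem sectionAt_succ_X_mul {k s : ℕ} (hs : s + 1 < k) (w : R) (p : R[X]) :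
    sectionAt k (s + 1) w (X * p) = sectionAt k s w p := by
  induction p using Polynomial.induction_on' with
  | add p q hp hq => simp only [mul_add, map_add, hp, hq]
  | monomial i a =>
    have hmod := Nat.add_one_mod_eq_ite (show 0 < k by omega) i
    rw [X_mul_monomial, sectionAt_monomial, sectionAt_monomial]
    by_cases hi : i % k = s
    · have hmod' : (i + 1) % k = s + 1 := by rw [hmod, if_neg (by omega), hi]
      rw [if_pos hmod', if_pos hi, Nat.succ_div_of_mod_ne_zero (by omega)]
    · have hmod' : (i + 1) % k ≠ s + 1 := by rw [hmod]; split_ifs <;> omega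
      rw [if_neg hmod', if_neg hi]

theorem sum_pow_mul_sectionAt_monomial {k : ℕ} (hk : 0 < k) (x w a : R) (i : ℕ) :
    ∑ s ∈ range k, x ^ s * sectionAt k s w (monomial i a) = a * x ^ (i % k) * w ^ (i / k) := by
  simp [sectionAt_monomial, Nat.mod_lt _ hk, mul_left_comm, mul_assoc]

theorem sum_pow_mul_sectionAt {k : ℕ} (hk : 0 < k) {x w : R} (hx : x ^ k = w) (p : R[X]) :
    ∑ s ∈ range k, x ^ s * sectionAt k s w p = p.eval x := by
  induction p using Polynomial.induction_on' with
  | add p q hp hq => simp only [map_add, mul_add, sum_add_distrib, hp, hq, eval_add]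
  | monomial i a =>
    rw [sum_pow_mul_sectionAt_monomial hk, eval_monomial, ← hx, ← pow_mul, mul_assoc, ← pow_add,
      Nat.mod_add_div]

theorem aeval_sum_C_sum_fiber_div {A : Type*} [CommSemiring A] [Algebra R A] {k : ℕ} (hk : 0 < k)
    (n : ℕ) (f : ℕ → R) (w : A) :
    aeval w (∑ j ∈ range (n / k + 1), C (∑ i ∈ range (n + 1) with i / k = j, f i) * X ^ j) =
      ∑ s ∈ range k,
        sectionAt k s w ((∑ i ∈ range (n + 1), C (f i) * X ^ i).map (algebraMap R A)) := by
  have hmaps : ∀ i ∈ range (n + 1), i / k ∈ range (n / k + 1) := fun i hi => by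
    simp only [mem_range, Nat.lt_succ_iff] at hi ⊢
    exact Nat.div_le_div_right hi
  calc _ = ∑ i ∈ range (n + 1), algebraMap R A (f i) * w ^ (i / k) := by
        simp only [map_sum, map_mul, aeval_C, map_pow, aeval_X, sum_mul]
        rw [← sum_fiberwise_of_maps_to hmaps]
        exact sum_congr rfl fun j _ => sum_congr rfl fun i hi => by rw [(mem_filter.1 hi).2]
    _ = _ := by
        simp only [Polynomial.map_sum, C_mul_X_pow_eq_monomial, map_sum]
        rw [sum_comm]
        refine sum_congr rfl fun i _ => ?_
        simpa using (sum_pow_mul_sectionAt_monomial hk 1 w (algebraMap R A (f i)) i).symm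

end Polynomial

namespace Complex

/-- For `0 < w.im`, the closed convex cone `{α + β w | 0 ≤ α, 0 ≤ β}` spanned by `1` and `w`. -/
def sector (w : ℂ) : Set ℂ := {a | 0 ≤ a.im ∧ (a * conj w).im ≤ 0}

variable {w : ℂ}

theorem mem_sector {a : ℂ} : a ∈ sector w ↔ 0 ≤ a.im ∧ (a * conj w).im ≤ 0 := Iff.rfl

theorem zero_mem_sector : (0 : ℂ) ∈ sector w := by simp [mem_sector]

theorem add_mem_sector {a b : ℂ} (ha : a ∈ sector w) (hb : b ∈ sector w) : a + b ∈ sector w := by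
  simp only [mem_sector, add_mul, add_im] at *
  constructor <;> linarith [ha.1, ha.2, hb.1, hb.2]

theorem ofReal_mul_mem_sector {t : ℝ} (ht : 0 ≤ t) {a : ℂ} (ha : a ∈ sector w) :
    (t : ℂ) * a ∈ sector w := by
  simp only [mem_sector, mul_assoc, im_ofReal_mul] at *
  exact ⟨mul_nonneg ht ha.1, mul_nonpos_of_nonneg_of_nonpos ht ha.2⟩

theorem mul_conj_self_mem_sector (hw : 0 ≤ w.im) (a : ℂ) : a * conj a ∈ sector w := by
  simp only [mem_sector, mul_conj, ofReal_im, le_refl, im_ofReal_mul, conj_im,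
    true_and]
  exact mul_nonpos_of_nonneg_of_nonpos (normSq_nonneg a) (neg_nonpos.2 hw)

/-- `c ↦ w * conj c` maps the sector into itself: it sends the generators `1, w` to `w, |w|²`. -/
theorem mul_mul_conj_mem_sector {a b : ℂ} (h : a * conj b ∈ sector w) :
    w * b * conj a ∈ sector w := by
  have e1 : w * b * conj a = conj (a * conj b * conj w) := by simp; ring
  have e2 : w * b * conj a * conj w = normSq w * conj (a * conj b) := by
    rw [← mul_conj w]; simp; ring
  refine ⟨?_, ?_⟩
  · rw [e1, conj_im]
    exact neg_nonneg.2 h.2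
  · rw [e2, im_ofReal_mul, conj_im]
    exact mul_nonpos_of_nonneg_of_nonpos (normSq_nonneg w) (neg_nonpos.2 h.1)

theorem add_mul_conj_add_mem_sector {A B C D : ℂ} {t : ℝ} (ht : 0 ≤ t)
    (hAC : A * conj C ∈ sector w) (hAD : A * conj D ∈ sector w)
    (hBC : B * conj C ∈ sector w) (hBD : B * conj D ∈ sector w) :
    (A + t * B) * conj (C + t * D) ∈ sector w := by
  have e : (A + t * B) * conj (C + t * D) =
      A * conj C + (t : ℂ) * (A * conj D + B * conj C) + ((t ^ 2 : ℝ) : ℂ) * (B * conj D) := by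
    simp only [map_add, map_mul, conj_ofReal]; push_cast; ring
  rw [e]
  exact add_mem_sector (add_mem_sector hAC (ofReal_mul_mem_sector ht (add_mem_sector hAD hBC)))
    (ofReal_mul_mem_sector (sq_nonneg t) hBD)

/-- For nonzero entries, `arg v 0 ≥ arg v 1 ≥ ⋯ ≥ arg v (k-1) ≥ arg v 0 - arg w`. -/
def SectorChain (k : ℕ) (w : ℂ) (v : ℕ → ℂ) : Prop :=
  ∀ ⦃s s' : ℕ⦄, s < s' → s' < k → v s * conj (v s') ∈ sector w

namespace SectorChain

variable {k : ℕ} {v : ℕ → ℂ}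

theorem mem_sector_of_le (h : SectorChain k w v) (hw : 0 ≤ w.im) {s s' : ℕ} (hss' : s ≤ s')
    (hs' : s' < k) : v s * conj (v s') ∈ sector w := by
  rcases hss'.eq_or_lt with rfl | hlt
  · exact mul_conj_self_mem_sector hw _
  · exact h hlt hs'

theorem shift_add (h : SectorChain k w v) (hw : 0 ≤ w.im) {t : ℝ} (ht : 0 ≤ t) {v' : ℕ → ℂ}
    (h0 : v' 0 = w * v (k - 1) + t * v 0)
    (hsucc : ∀ s, s + 1 < k → v' (s + 1) = v s + t * v (s + 1)) :
    SectorChain k w v' := by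
  intro s s' hss' hs'
  obtain ⟨r', rfl⟩ : ∃ r', s' = r' + 1 := ⟨s' - 1, by omega⟩
  have hle := fun {a b : ℕ} (hab : a ≤ b) (hb : b < k) => h.mem_sector_of_le hw hab hb
  rw [hsucc r' hs']
  cases s with
  | zero =>
    rw [h0]
    exact add_mul_conj_add_mem_sector ht
      (mul_mul_conj_mem_sector (hle (by omega) (by omega)))
      (mul_mul_conj_mem_sector (hle (by omega) (by omega)))
      (hle (by omega) (by omega)) (hle (by omega) hs')
  | succ r =>
    rw [hsucc r (by omega)]
    exact add_mul_conj_add_mem_sector ht (hle (by omega) (by omega)) (hle (by omega) hs')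
      (hle (by omega) (by omega)) (hle (by omega) hs')

theorem sum_ne_zero (h : SectorChain k w v) (hw : 0 < w.im) (hne : ∃ s < k, v s ≠ 0) :
    ∑ s ∈ range k, v s ≠ 0 := by
  obtain ⟨s₁, hs₁, hmax⟩ := ((range k).filter (v · ≠ 0)).exists_max_image id
    (by simpa [Finset.Nonempty] using hne)
  simp only [mem_filter, mem_range, id] at hs₁ hmax
  have hterm : ∀ s ∈ range k, (v s * conj (v s₁) * conj w).im ≤ 0 := fun s hs => by
    by_cases hs0 : v s = 0
    · simp [hs0]
    · exact (h.mem_sector_of_le hw.le (hmax s ⟨mem_range.1 hs, hs0⟩) hs₁.1).2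
  have hterm₁ : (v s₁ * conj (v s₁) * conj w).im < 0 := by
    rw [mul_conj, im_ofReal_mul, conj_im]
    exact mul_neg_of_pos_of_neg (normSq_pos.2 hs₁.2) (neg_neg_of_pos hw)
  intro hsum
  have hneg : ((∑ s ∈ range k, v s) * conj (v s₁) * conj w).im < 0 := by
    simpa only [sum_mul, im_sum] using sum_neg' hterm ⟨s₁, mem_range.2 hs₁.1, hterm₁⟩
  simp [hsum] at hneg

end SectorChain

end Complex

namespace Polynomial

open Complex

theorem sectorChain_sectionAt_C (k : ℕ) (w c : ℂ) : SectorChain k w (sectionAt k · w (C c)) := by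
  intro s s' hss' _
  beta_reduce
  rw [sectionAt_C k s' w c, if_neg (by omega : s' ≠ 0), map_zero, mul_zero]
  exact zero_mem_sector

theorem sectorChain_sectionAt_X_add_C_mul {k : ℕ} (hk : 0 < k) {w : ℂ} (hw : 0 ≤ w.im)
    {p : ℂ[X]} (h : SectorChain k w (sectionAt k · w p)) {t : ℝ} (ht : 0 ≤ t) :
    SectorChain k w (sectionAt k · w ((X + C (t : ℂ)) * p)) :=
  h.shift_add hw ht (by rw [add_mul, map_add, sectionAt_zero_X_mul hk, sectionAt_C_mul])
    fun s hs => by rw [add_mul, map_add, sectionAt_succ_X_mul hs, sectionAt_C_mul]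

theorem sectorChain_sectionAt_of_roots_nonpos {k : ℕ} (hk : 0 < k) {w : ℂ} (hw : 0 ≤ w.im)
    {p : ℂ[X]} (hroots : ∀ z ∈ p.roots, z ≤ 0) : SectorChain k w (sectionAt k · w p) := by
  rw [(IsAlgClosed.splits p).eq_prod_roots]
  generalize p.roots = m at hroots
  induction m using Multiset.induction_on with
  | empty => simpa using sectorChain_sectionAt_C k w p.leadingCoeff
  | cons z m ih =>
    have hz : z.re ≤ 0 ∧ z.im = 0 := by simpa using le_def.1 (hroots z (Multiset.mem_cons_self z m))
    have hXz : X - C z = X + C ((-z.re : ℝ) : ℂ) := by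
      rw [sub_eq_add_neg, ← map_neg]
      congr 2
      apply Complex.ext <;> simp [hz.2]
    rw [Multiset.map_cons, Multiset.prod_cons, mul_left_comm, hXz]
    exact sectorChain_sectionAt_X_add_C_mul hk hw
      (ih fun z hz => hroots z (Multiset.mem_cons_of_mem hz)) (by linarith [hz.1])

theorem sum_sectionAt_ne_zero {k : ℕ} (hk : 0 < k) {w : ℂ} (hw : 0 < w.im) {p : ℂ[X]}
    (hp : p ≠ 0) (hroots : ∀ z ∈ p.roots, z ≤ 0) : ∑ s ∈ range k, sectionAt k s w p ≠ 0 := by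
  refine (sectorChain_sectionAt_of_roots_nonpos hk hw.le hroots).sum_ne_zero hw ?_
  by_contra! hzero
  obtain ⟨x, hx⟩ := IsAlgClosed.exists_pow_nat_eq w hk
  have hroot : p.IsRoot x := by
    rw [IsRoot, ← sum_pow_mul_sectionAt hk hx]
    exact sum_eq_zero fun s hs => by rw [hzero s (mem_range.1 hs), mul_zero]
  have hx_im : x.im = 0 := (le_def.1 (hroots x ((mem_roots hp).2 hroot))).2
  have : w.im = 0 := by
    rw [← hx, ← re_add_im x, hx_im]
    simp [← ofReal_pow]
  exact hw.ne' this

end Polynomial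

theorem realRooted_of_aeval_ne_zero {F : ℝ[X]} (h : ∀ z : ℂ, 0 < z.im → aeval z F ≠ 0) :
    RealRooted F := by
  intro z hz
  rw [IsRoot, eval_map_algebraMap] at hz
  by_contra hne
  rcases lt_or_gt_of_ne hne with hneg | hpos
  · refine h (conj z) (by simpa using hneg) ?_
    rw [← Complex.conjAe_coe, aeval_algHom_apply, hz, map_zero]
  · exact h z hpos hz

theorem roots_map_nonpos_of_realRooted {F : ℝ[X]} (hF : RealRooted F)
    (hpos : ∀ x : ℝ, 0 < x → 0 < F.eval x) : ∀ z ∈ (F.map (algebraMap ℝ ℂ)).roots, z ≤ 0 := by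
  intro z hz
  have hroot := isRoot_of_mem_roots hz
  have him := hF z hroot
  refine Complex.le_def.2 ⟨?_, him⟩
  by_contra! hre
  rw [IsRoot, show z = (z.re : ℂ) from Complex.ext rfl (by simp [him]), eval_map_algebraMap,
    ← Complex.coe_algebraMap, aeval_algebraMap_apply_eq_algebraMap_eval] at hroot
  simp only [map_eq_zero_iff _ (algebraMap ℝ ℂ).injective] at hroot
  exact (hpos z.re hre).ne' hroot

theorem ghosh_liggett_pemantle_floor_div_general (n : ℕ) (f : ℕ → ℝ)
    (hf0 : ∀ i, 0 ≤ f i)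
    (hsum : ∑ i ∈ Finset.range (n + 1), f i = 1)
    (hSR : RealRooted (∑ i ∈ Finset.range (n + 1), Polynomial.C (f i) * Polynomial.X ^ i))
    (k : ℕ) (hk : 1 ≤ k) :
    RealRooted (∑ j ∈ Finset.range (n / k + 1),
      Polynomial.C (∑ i ∈ (Finset.range (n + 1)).filter fun i => i / k = j, f i) *
        Polynomial.X ^ j) := by
  set F := ∑ i ∈ range (n + 1), C (f i) * X ^ i
  have hpos : ∀ x : ℝ, 0 < x → 0 < F.eval x := fun x hx => by
    obtain ⟨i, hi, hfi⟩ := exists_ne_zero_of_sum_ne_zero (hsum ▸ one_ne_zero)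
    simp only [F, eval_finsetSum, eval_mul, eval_C, eval_pow, eval_X]
    exact sum_pos' (fun i _ => mul_nonneg (hf0 i) (pow_pos hx i).le)
      ⟨i, hi, mul_pos ((hf0 i).lt_of_ne' hfi) (pow_pos hx i)⟩
  have hF : F.map (algebraMap ℝ ℂ) ≠ 0 :=
    (Polynomial.map_ne_zero_iff (algebraMap ℝ ℂ).injective).2 fun h => by simpa [h] using hpos 1
  refine realRooted_of_aeval_ne_zero fun w hw => ?_
  rw [aeval_sum_C_sum_fiber_div hk]
  exact sum_sectionAt_ne_zero hk hw hF (roots_map_nonpos_of_realRooted hSR hpos)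

/-- Integer division preserves the strongly Rayleigh property (Ghosh–Liggett–Pemantle):
if `X` is an integer-valued random variable with values in `{0, ..., n}`, with pmf `f`,
whose probability generating function `Σ_{i=0}^n P(X = i) z^i` has only real roots
(i.e. `X` is strongly Rayleigh), then for every `k ≥ 1` the probability generating
function of `⌊X/k⌋` also has only real roots. -/
theorem ghosh_liggett_pemantle_floor_div (n : ℕ) (f : ℕ → ℝ)
    (hf0 : ∀ i, 0 ≤ f i) (hsupp : ∀ i, n < i → f i = 0)
    (hsum : ∑ i ∈ Finset.range (n + 1), f i = 1)
    (hSR : RealRooted (∑ i ∈ Finset.range (n + 1), Polynomial.C (f i) * Polynomial.X ^ i))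
    (k : ℕ) (hk : 1 ≤ k) :
    RealRooted (∑ j ∈ Finset.range (n / k + 1),
      Polynomial.C (∑ i ∈ (Finset.range (n + 1)).filter fun i => i / k = j, f i) *
        Polynomial.X ^ j) :=
  ghosh_liggett_pemantle_floor_div_general n f hf0 hsum hSR k hk
end
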